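/- arXiv:1311.6046 — 8 statements merged into one kernel-verified Lean document; each statement's English description precedes it below -/
import Mathlib

section
/- Let k ∈ {0,…,D−1}, let t_0 ≤ t be times and τ ≥ 0, and let v be a trajectory of the consensus system defined on [t_0, t+τ]. Assume the interaction graph G(s) satisfies Hypothesis 1 for all s ∈ [t, t+τ]. Then Δ_{U_{k+1}}(t+τ) ≤ Δ_N(t_0) − c_k(τ)·(Δ_N(t_0) − Δ_{U_k}(t)), where c_0(τ) = (1/(m+1))(1 − e^{−(m+1)τ}) and c_k(τ) = e^{−mτ}(e^{α_k τ} − 1) for k ≥ 1. -/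
open scoped Classical

/-- The pair `(SS_k, U_k)` of the hierarchical structure attached to the graph with
adjacency `ta` and root `r`:
`SS_0 = {r}`, `U_k = ⋃_{l ≤ k} SS_l`, `SS_{k+1} = {i | ∃ j ∈ SS_k, ta i j = 1} \ U_k`. -/
noncomputable def hierSU {n : ℕ} (ta : Fin n → Fin n → ℝ) (r : Fin n) :
    ℕ → Finset (Fin n) × Finset (Fin n)
  | 0 => ({r}, {r})
  | k + 1 =>
      let p := hierSU ta r k
      let s := (Finset.univ.filter fun i => ∃ j ∈ p.1, ta i j = 1) \ p.2
      (s, p.2 ∪ s)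

/-- `U_k`. -/
noncomputable def hierU {n : ℕ} (ta : Fin n → Fin n → ℝ) (r : Fin n) (k : ℕ) :
    Finset (Fin n) :=
  (hierSU ta r k).2

/-- `α_k = min_{i ∈ U_{k+1}} ∑_{j ∈ U_k} ta i j`. -/
noncomputable def hierAlpha {n : ℕ} (ta : Fin n → Fin n → ℝ) (r : Fin n) (k : ℕ) : ℝ :=
  sInf ((fun i => ∑ j ∈ hierU ta r k, ta i j) '' ↑(hierU ta r (k + 1)))

/-- Hypothesis 1 (preservation of the hierarchical structure) for a graph with
adjacency `a`. -/
def HypOne {n : ℕ} (m D : ℕ) (ta : Fin n → Fin n → ℝ) (r : Fin n)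
    (a : Fin n → Fin n → ℝ) : Prop :=
  (∀ i ∈ hierU ta r 1, a i r = 1) ∧
  ∀ k : ℕ, 1 ≤ k → k ≤ D - 1 → ∀ i ∈ hierU ta r (k + 1),
    hierAlpha ta r k ≤ ∑ j ∈ hierU ta r k, a i j ∧
    ∑ j ∈ (hierU ta r k)ᶜ, a i j ≤ (m : ℝ) - hierAlpha ta r k

/-- Velocity diameter of the set `S` of agents. -/
noncomputable def sdiam {n d : ℕ} (S : Set (Fin n))
    (v : Fin n → EuclideanSpace ℝ (Fin d)) : ℝ :=
  sSup {x | ∃ i ∈ S, ∃ j ∈ S, x = ‖v i - v j‖}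

/-- `c₀(τ) = (1/(m+1))(1 - e^{-(m+1)τ})` and, for `k ≥ 1`,
`c_k(τ) = e^{-mτ}(e^{α_k τ} - 1)`. -/
noncomputable def cfun (m : ℕ) (α : ℕ → ℝ) (k : ℕ) (τ : ℝ) : ℝ :=
  if k = 0 then (1 / ((m : ℝ) + 1)) * (1 - Real.exp (-((m : ℝ) + 1) * τ))
  else Real.exp (-(m : ℝ) * τ) * (Real.exp (α k * τ) - 1)

/-!
Projecting onto a direction `e` turns the system into a scalar consensus system, and the
diameter of a group bounds the spread `max - min` of its projections onto unit vectors. For a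
scalar solution the maximum never increases, and all other estimates come from one drift bound
at a maximising agent combined with Gronwall's inequality: an agent putting weight at least `α`
on a group whose states lie below `B ≤ M` (with all states below `M`) moves at rate at most
`α B + (m - α) M - m xᵢ`. For `k ≥ 1` this makes the maximum over `U_k` relax towards the global
maximum at rate `m - α_k`, which in turn keeps every agent of `U_{k+1}` below the global maximum
by `c_k(τ)` times the initial gap; applying this to `x` and to `-x` bounds the spread on
`U_{k+1}`. For `k = 0`, two agents both listening to the root see their difference contract at
rate `m` against a forcing `(m - 1)(max - min)`.
-/

open Set Filter Real
open scoped Topology RealInnerProductSpace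

theorem eventually_slope_finset_sup'_lt {ι : Type*} {S : Finset ι} (hS : S.Nonempty)
    {g : ι → ℝ → ℝ} {g' : ι → ℝ} {x r : ℝ} (hg : ∀ i ∈ S, HasDerivAt (g i) (g' i) x)
    (hr : ∀ i ∈ S, g i x = S.sup' hS (g · x) → g' i < r) :
    ∀ᶠ z in 𝓝[>] x, slope (fun s => S.sup' hS (g · s)) x z < r := by
  have key : ∀ i ∈ S, ∀ᶠ z in 𝓝[>] x, g i z < S.sup' hS (g · x) + r * (z - x) := by
    intro i hi
    rcases (Finset.le_sup' (g · x) hi).eq_or_lt with hmax | hlt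
    · have hslope : Tendsto (slope (g i) x) (𝓝[>] x) (𝓝 (g' i)) :=
        (hasDerivAt_iff_tendsto_slope.1 (hg i hi)).mono_left
          (nhdsWithin_mono x fun z hz => ne_of_gt hz)
      filter_upwards [hslope.eventually_lt_const (hr i hi hmax), self_mem_nhdsWithin]
        with z hz hxz
      rw [slope_def_field, div_lt_iff₀ (sub_pos.2 hxz)] at hz
      linarith
    · refine nhdsWithin_le_nhds ((hg i hi).continuousAt.eventually_lt (by fun_prop) ?_)
      simpa only [sub_self, mul_zero, add_zero] using hlt
  filter_upwards [(eventually_all_finset S).2 key, self_mem_nhdsWithin] with z hz hxz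
  rw [slope_def_field, div_lt_iff₀ (sub_pos.2 hxz), sub_lt_iff_lt_add']
  exact (Finset.sup'_lt_iff hS).2 hz

theorem finset_sup'_le_gronwallBound {ι : Type*} {S : Finset ι} (hS : S.Nonempty)
    {g g' : ι → ℝ → ℝ} {a b δ K ε : ℝ}
    (hg : ∀ i ∈ S, ∀ s ∈ Icc a b, HasDerivAt (g i) (g' i s) s)
    (ha : S.sup' hS (g · a) ≤ δ)
    (bound : ∀ s ∈ Ico a b, ∀ i ∈ S, g i s = S.sup' hS (g · s) →
      g' i s ≤ K * S.sup' hS (g · s) + ε) :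
    ∀ s ∈ Icc a b, S.sup' hS (g · s) ≤ gronwallBound δ K ε (s - a) :=
  le_gronwallBound_of_liminf_deriv_right_le (f' := fun s => K * S.sup' hS (g · s) + ε)
    (ContinuousOn.finset_sup'_apply hS fun i hi s hs =>
      (hg i hi s hs).continuousAt.continuousWithinAt)
    (fun s hs _ hr => (eventually_slope_finset_sup'_lt hS
      (fun i hi => hg i hi s (Ico_subset_Icc_self hs))
      fun i hi hmax => (bound s hs i hi hmax).trans_lt hr).frequently)
    ha fun _ _ => le_rfl

theorem le_gronwallBound_of_hasDerivAt {f f' : ℝ → ℝ} {a b δ K ε : ℝ}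
    (hf : ∀ s ∈ Icc a b, HasDerivAt f (f' s) s) (ha : f a ≤ δ)
    (bound : ∀ s ∈ Ico a b, f' s ≤ K * f s + ε) :
    ∀ s ∈ Icc a b, f s ≤ gronwallBound δ K ε (s - a) :=
  le_gronwallBound_of_liminf_deriv_right_le
    (fun s hs => (hf s hs).continuousAt.continuousWithinAt)
    (fun s hs _ hr => (hf s (Ico_subset_Icc_self hs)).hasDerivWithinAt.liminf_right_slope_le hr)
    ha bound

theorem gronwallBound_neg_mul (δ K M x : ℝ) :
    gronwallBound δ K (-K * M) x = M + (δ - M) * exp (K * x) := by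
  rcases eq_or_ne K 0 with rfl | hK
  · simp [gronwallBound_K0]
  · rw [gronwallBound_of_K_ne_0 hK]
    field_simp
    ring

theorem norm_le_of_forall_inner_le {E : Type*} [NormedAddCommGroup E] [InnerProductSpace ℝ E]
    {u : E} {C : ℝ} (hC : 0 ≤ C) (h : ∀ e : E, ⟪e, u⟫ ≤ ‖e‖ * C) : ‖u‖ ≤ C := by
  rcases eq_or_ne u 0 with rfl | hu
  · simpa using hC
  · have := h u
    rw [real_inner_self_eq_norm_mul_norm] at this
    exact le_of_mul_le_mul_left this (norm_pos_iff.2 hu)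

theorem sum_mul_sub_le {ι : Type*} [Fintype ι] {c w : ι → ℝ} {m α B M : ℝ} (S : Finset ι)
    (hc : ∀ j, 0 ≤ c j) (hsum : ∑ j, c j = m) (hα : α ≤ ∑ j ∈ S, c j)
    (hB : ∀ j ∈ S, w j ≤ B) (hM : ∀ j, w j ≤ M) (hBM : B ≤ M) (y : ℝ) :
    ∑ j, c j * (w j - y) ≤ α * B + (m - α) * M - m * y := by
  have hsplit := Finset.sum_add_sum_compl S c
  calc ∑ j, c j * (w j - y)
      = ∑ j ∈ S, c j * (w j - y) + ∑ j ∈ Sᶜ, c j * (w j - y) :=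
        (Finset.sum_add_sum_compl S _).symm
    _ ≤ ∑ j ∈ S, c j * (B - y) + ∑ j ∈ Sᶜ, c j * (M - y) := by
        gcongr with j hj j
        · exact hc j
        · exact hB j hj
        · exact hc j
        · exact hM j
    _ = (∑ j ∈ S, c j) * (B - y) + (m - ∑ j ∈ S, c j) * (M - y) := by
        rw [← Finset.sum_mul, ← Finset.sum_mul, ← hsum, ← hsplit]
        ring
    _ ≤ α * B + (m - α) * M - m * y := by
        nlinarith [mul_le_mul_of_nonneg_right hα (sub_nonneg.2 hBM)]

def IsConsensusSolOn {ι : Type*} [Fintype ι] (a : ℝ → ι → ι → ℝ) (x : ι → ℝ → ℝ)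
    (I : Set ℝ) : Prop :=
  ∀ i, ∀ s ∈ I, HasDerivAt (x i) (∑ j, a s i j * (x j s - x i s)) s

theorem isConsensusSolOn_inner {ι E : Type*} [Fintype ι] [NormedAddCommGroup E]
    [InnerProductSpace ℝ E] {a : ℝ → ι → ι → ℝ} {v : ℝ → ι → E} {I : Set ℝ}
    (hv : ∀ i, ∀ s ∈ I, HasDerivAt (fun w => v w i) (∑ j, a s i j • (v s j - v s i)) s)
    (e : E) : IsConsensusSolOn a (fun i s => ⟪e, v s i⟫) I := by
  intro i s hs
  refine ((hasDerivAt_const s e).inner ℝ (hv i s hs)).congr_deriv ?_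
  simp [inner_sum, inner_smul_right, inner_sub_right]

namespace IsConsensusSolOn

variable {ι : Type*} [Fintype ι] {a : ℝ → ι → ι → ℝ} {x : ι → ℝ → ℝ}

theorem mono {I J : Set ℝ} (hx : IsConsensusSolOn a x I) (hJI : J ⊆ I) :
    IsConsensusSolOn a x J :=
  fun i s hs => hx i s (hJI hs)

theorem neg {I : Set ℝ} (hx : IsConsensusSolOn a x I) :
    IsConsensusSolOn a (fun i s => -x i s) I := by
  intro i s hs
  refine (hx i s hs).neg.congr_deriv ?_
  rw [← Finset.sum_neg_distrib]
  congr 1 with j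
  ring

theorem le_of_forall_le (ha0 : ∀ s i j, 0 ≤ a s i j) {t₀ t₁ M : ℝ}
    (hx : IsConsensusSolOn a x (Icc t₀ t₁)) (hM : ∀ l, x l t₀ ≤ M) :
    ∀ s ∈ Icc t₀ t₁, ∀ l, x l s ≤ M := by
  intro s hs l
  have hne : (Finset.univ : Finset ι).Nonempty := ⟨l, Finset.mem_univ l⟩
  have key := finset_sup'_le_gronwallBound hne (fun i _ => hx i)
    (Finset.sup'_le _ _ fun l _ => hM l) (K := 0) (ε := 0) fun s _ i _ hmax => by
      rw [zero_mul, add_zero]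
      refine Finset.sum_nonpos fun j _ => mul_nonpos_of_nonneg_of_nonpos (ha0 s i j) ?_
      rw [sub_nonpos, hmax]
      exact Finset.le_sup' (x · s) (Finset.mem_univ j)
  simpa [gronwallBound_K0] using (Finset.le_sup' (x · s) (Finset.mem_univ l)).trans (key s hs)

theorem le_of_forall_ge (ha0 : ∀ s i j, 0 ≤ a s i j) {t₀ t₁ μ : ℝ}
    (hx : IsConsensusSolOn a x (Icc t₀ t₁)) (hμ : ∀ l, μ ≤ x l t₀) :
    ∀ s ∈ Icc t₀ t₁, ∀ l, μ ≤ x l s := by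
  intro s hs l
  simpa using hx.neg.le_of_forall_le ha0 (M := -μ) (fun l => neg_le_neg (hμ l)) s hs l

theorem le_of_sum_ge {m : ℝ} (ha0 : ∀ s i j, 0 ≤ a s i j) (hreg : ∀ s i, ∑ j, a s i j = m)
    {S : Finset ι} {t₀ t₁ M δ α : ℝ} (hx : IsConsensusSolOn a x (Icc t₀ t₁))
    (hM : ∀ s ∈ Icc t₀ t₁, ∀ l, x l s ≤ M) (hδ : ∀ j ∈ S, x j t₀ ≤ δ)
    (hα : ∀ s ∈ Icc t₀ t₁, ∀ i ∈ S, α ≤ ∑ j ∈ S, a s i j) :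
    ∀ s ∈ Icc t₀ t₁, ∀ j ∈ S, x j s ≤ M + (δ - M) * exp ((α - m) * (s - t₀)) := by
  intro s hs j hj
  have hS : S.Nonempty := ⟨j, hj⟩
  have key := finset_sup'_le_gronwallBound hS (fun i _ => hx i) (Finset.sup'_le _ _ hδ)
    (K := α - m) (ε := -(α - m) * M) fun s hs i hi hmax => by
      have := sum_mul_sub_le S (ha0 s i) (hreg s i) (hα s (Ico_subset_Icc_self hs) i hi)
        (fun j hj => (Finset.le_sup' (x · s) hj).trans_eq hmax.symm)
        (hM s (Ico_subset_Icc_self hs)) (hM s (Ico_subset_Icc_self hs) i) (x i s)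
      rw [← hmax]
      linarith
  rw [← gronwallBound_neg_mul]
  exact (Finset.le_sup' (x · s) hj).trans (key s hs)

theorem le_sub_mul_of_sum_ge {m : ℝ} (ha0 : ∀ s i j, 0 ≤ a s i j)
    (hreg : ∀ s i, ∑ j, a s i j = m) {S T : Finset ι} (hST : S ⊆ T) {t τ M δ α : ℝ}
    (hτ : 0 ≤ τ) (hx : IsConsensusSolOn a x (Icc t (t + τ)))
    (hM : ∀ s ∈ Icc t (t + τ), ∀ l, x l s ≤ M) (hδ : ∀ j ∈ S, x j t ≤ δ) (hδM : δ ≤ M)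
    (hα : ∀ s ∈ Icc t (t + τ), ∀ i ∈ T, α ≤ ∑ j ∈ S, a s i j) :
    ∀ i ∈ T, x i (t + τ) ≤ M - exp (-m * τ) * (exp (α * τ) - 1) * (M - δ) := by
  intro i hi
  set B : ℝ → ℝ := fun s => M + (δ - M) * exp ((α - m) * (s - t)) with hB_def
  have hxB : ∀ s ∈ Icc t (t + τ), ∀ j ∈ S, x j s ≤ B s :=
    hx.le_of_sum_ge ha0 hreg hM hδ fun s hs i hi => hα s hs i (hST hi)
  have hBM : ∀ s, B s ≤ M := fun s => by
    have : (δ - M) * exp ((α - m) * (s - t)) ≤ 0 :=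
      mul_nonpos_of_nonpos_of_nonneg (by linarith) (exp_pos _).le
    simp only [hB_def]
    linarith
  have hBd : ∀ s, HasDerivAt B ((α - m) * (B s - M)) s := fun s => by
    have := (((hasDerivAt_id s).sub_const t).const_mul (α - m)).exp.const_mul (δ - M)
      |>.const_add M
    exact this.congr_deriv (by simp only [hB_def, id]; ring)
  -- The gap to the moving bound `B` on the group decays at rate `m`.
  have key := le_gronwallBound_of_hasDerivAt (f := fun s => x i s - B s)
    (fun s hs => (hx i s hs).sub (hBd s)) (δ := M - δ) (K := -m) (ε := 0)
    (by simp only [hB_def, sub_self, mul_zero, exp_zero]; linarith [hM t ⟨le_rfl, by linarith⟩ i])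
    (fun s hs => by
      have := sum_mul_sub_le S (ha0 s i) (hreg s i) (hα s (Ico_subset_Icc_self hs) i hi)
        (hxB s (Ico_subset_Icc_self hs)) (hM s (Ico_subset_Icc_self hs)) (hBM s) (x i s)
      linarith)
    (t + τ) ⟨by linarith, le_rfl⟩
  have hexp : exp ((α - m) * τ) = exp (-m * τ) * exp (α * τ) := by
    rw [← exp_add]
    ring_nf
  simp only [gronwallBound_ε0, add_sub_cancel_left, hB_def, hexp] at key
  linarith

theorem sub_le_of_common_neighbor {m : ℝ} (hm : 0 < m) (ha0 : ∀ s i j, 0 ≤ a s i j)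
    (hreg : ∀ s i, ∑ j, a s i j = m) {r i j : ι} {t τ M μ : ℝ} (hτ : 0 ≤ τ)
    (hx : IsConsensusSolOn a x (Icc t (t + τ)))
    (hM : ∀ s ∈ Icc t (t + τ), ∀ l, x l s ≤ M) (hμ : ∀ s ∈ Icc t (t + τ), ∀ l, μ ≤ x l s)
    (hir : ∀ s ∈ Icc t (t + τ), a s i r = 1) (hjr : ∀ s ∈ Icc t (t + τ), a s j r = 1) :
    x i (t + τ) - x j (t + τ) ≤ (M - μ) * (1 - (1 - exp (-m * τ)) / m) := by
  have key := le_gronwallBound_of_hasDerivAt (f := fun s => x i s - x j s)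
    (fun s hs => (hx i s hs).sub (hx j s hs)) (δ := M - μ) (K := -m)
    (ε := -(-m) * ((m - 1) / m * (M - μ)))
    (by linarith [hM t ⟨le_rfl, by linarith⟩ i, hμ t ⟨le_rfl, by linarith⟩ j])
    (fun s hs => by
      have hs' := Ico_subset_Icc_self hs
      -- The root term `x r` cancels in the difference of the two drifts.
      have hdrift_i := sum_mul_sub_le {r} (ha0 s i) (hreg s i) (α := 1) (by simp [hir s hs'])
        (B := x r s) (by simp) (hM s hs') (hM s hs' r) (x i s)
      have hdrift_j := sum_mul_sub_le {r} (ha0 s j) (hreg s j) (α := 1) (by simp [hjr s hs'])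
        (w := fun l => -x l s) (B := -x r s) (M := -μ) (by simp)
        (fun l => neg_le_neg (hμ s hs' l)) (neg_le_neg (hμ s hs' r)) (-x j s)
      have hneg : ∑ l, a s j l * (-x l s - -x j s) = -∑ l, a s j l * (x l s - x j s) := by
        rw [← Finset.sum_neg_distrib]
        congr 1 with l
        ring
      have hε : -(-m) * ((m - 1) / m * (M - μ)) = (m - 1) * (M - μ) := by
        field_simp
      rw [hε]
      linarith)
    (t + τ) ⟨by linarith, le_rfl⟩
  rw [gronwallBound_neg_mul, add_sub_cancel_left] at key
  refine key.trans_eq ?_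
  field_simp
  ring

end IsConsensusSolOn

section Hierarchy

variable {n : ℕ}

theorem root_mem_hierU (ta : Fin n → Fin n → ℝ) (r : Fin n) : ∀ k, r ∈ hierU ta r k
  | 0 => Finset.mem_singleton_self r
  | k + 1 => Finset.mem_union_left _ (root_mem_hierU ta r k)

theorem hierU_subset_succ (ta : Fin n → Fin n → ℝ) (r : Fin n) (k : ℕ) :
    hierU ta r k ⊆ hierU ta r (k + 1) :=
  Finset.subset_union_left

theorem hierAlpha_nonneg {ta : Fin n → Fin n → ℝ} (hta : ∀ i j, 0 ≤ ta i j) (r : Fin n)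
    (k : ℕ) : 0 ≤ hierAlpha ta r k :=
  Real.sInf_nonneg (by rintro _ ⟨i, -, rfl⟩; exact Finset.sum_nonneg fun j _ => hta i j)

theorem HypOne.hierAlpha_le {m D k : ℕ} {ta A : Fin n → Fin n → ℝ} {r : Fin n}
    (h : HypOne m D ta r A) (hA : ∀ i j, 0 ≤ A i j) (hreg : ∀ i, ∑ j, A i j = m)
    (hk1 : 1 ≤ k) (hkD : k ≤ D - 1) : hierAlpha ta r k ≤ m :=
  calc hierAlpha ta r k ≤ ∑ j ∈ hierU ta r k, A r j := (h.2 k hk1 hkD r (root_mem_hierU ta r _)).1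
    _ ≤ ∑ j, A r j := Finset.sum_le_sum_of_subset_of_nonneg (Finset.subset_univ _)
        fun j _ _ => hA r j
    _ = m := hreg r

end Hierarchy

section Rates

variable {m : ℕ} {α : ℕ → ℝ} {k : ℕ} {τ : ℝ}

theorem cfun_of_ne_zero (hk : k ≠ 0) :
    cfun m α k τ = exp (-m * τ) * (exp (α k * τ) - 1) :=
  if_neg hk

theorem cfun_nonneg (hτ : 0 ≤ τ) (hα : k ≠ 0 → 0 ≤ α k) : 0 ≤ cfun m α k τ := by
  rcases eq_or_ne k 0 with rfl | hk
  · have : exp (-((m : ℝ) + 1) * τ) ≤ 1 := exp_le_one_iff.2 (by nlinarith)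
    simp only [cfun, if_true]
    exact mul_nonneg (by positivity) (by linarith)
  · rw [cfun_of_ne_zero hk]
    exact mul_nonneg (exp_pos _).le (by linarith [one_le_exp (mul_nonneg (hα hk) hτ)])

theorem cfun_le_one (hτ : 0 ≤ τ) (hα : k ≠ 0 → α k ≤ m) : cfun m α k τ ≤ 1 := by
  rcases eq_or_ne k 0 with rfl | hk
  · have h1 : 0 < exp (-((m : ℝ) + 1) * τ) := exp_pos _
    have h2 : 1 / ((m : ℝ) + 1) ≤ 1 := by
      rw [div_le_one (by positivity)]
      linarith [m.cast_nonneg (α := ℝ)]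
    simp only [cfun, if_true]
    calc _ ≤ 1 / ((m : ℝ) + 1) * 1 := mul_le_mul_of_nonneg_left (by linarith) (by positivity)
      _ ≤ 1 := by rwa [mul_one]
  · have : exp ((α k - m) * τ) ≤ 1 :=
      exp_le_one_iff.2 (mul_nonpos_of_nonpos_of_nonneg (by linarith [hα hk]) hτ)
    rw [cfun_of_ne_zero hk, mul_sub, mul_one, ← exp_add,
      show -m * τ + α k * τ = (α k - m) * τ by ring]
    linarith [exp_pos (-m * τ)]

/-- Both sides are `∫₀^τ e^{-λs} ds`, for `λ = m + 1` and `λ = m`. -/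
theorem cfun_zero_le (hm : 1 ≤ m) :
    cfun m α 0 τ ≤ (1 - exp (-m * τ)) / m := by
  have hm0 : (0 : ℝ) < m := by exact_mod_cast hm
  have hsplit : exp (-((m : ℝ) + 1) * τ) = exp (-m * τ) * exp (-τ) := by
    rw [← exp_add]
    ring_nf
  have hinv : exp (-m * τ) * exp (m * τ) = 1 := by
    rw [← exp_add]
    simp
  have h1 : 1 - τ ≤ exp (-τ) := by linarith [add_one_le_exp (-τ)]
  have h2 : 1 + m * τ ≤ exp (m * τ) := by linarith [add_one_le_exp (m * τ)]
  have key : exp (-m * τ) * (1 + m * (1 - exp (-τ))) ≤ 1 :=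
    calc exp (-m * τ) * (1 + m * (1 - exp (-τ))) ≤ exp (-m * τ) * exp (m * τ) := by
          gcongr
          nlinarith
      _ = 1 := hinv
  simp only [cfun, if_true]
  rw [one_div, inv_mul_eq_div, div_le_div_iff₀ (by positivity) hm0, hsplit]
  nlinarith

end Rates

section Diameter

variable {n d : ℕ}

theorem norm_sub_le_sdiam {S : Set (Fin n)} (w : Fin n → EuclideanSpace ℝ (Fin d)) {i j : Fin n}
    (hi : i ∈ S) (hj : j ∈ S) : ‖w i - w j‖ ≤ sdiam S w := by
  refine le_csSup ((Set.finite_range fun p : Fin n × Fin n => ‖w p.1 - w p.2‖).subset ?_).bddAbove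
    ⟨i, hi, j, hj, rfl⟩
  rintro _ ⟨i, -, j, -, rfl⟩
  exact ⟨(i, j), rfl⟩

theorem sdiam_nonneg (S : Set (Fin n)) (w : Fin n → EuclideanSpace ℝ (Fin d)) :
    0 ≤ sdiam S w :=
  Real.sSup_nonneg (by rintro _ ⟨i, -, j, -, rfl⟩; exact norm_nonneg _)

theorem sdiam_le {S : Set (Fin n)} {w : Fin n → EuclideanSpace ℝ (Fin d)} {C : ℝ} (hC : 0 ≤ C)
    (h : ∀ i ∈ S, ∀ j ∈ S, ‖w i - w j‖ ≤ C) : sdiam S w ≤ C :=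
  Real.sSup_le (by rintro _ ⟨i, hi, j, hj, rfl⟩; exact h i hi j hj) hC

theorem finset_sup'_sub_inf'_inner_le {S : Finset (Fin n)} (hS : S.Nonempty)
    (w : Fin n → EuclideanSpace ℝ (Fin d)) (e : EuclideanSpace ℝ (Fin d)) :
    S.sup' hS (fun l => ⟪e, w l⟫) - S.inf' hS (fun l => ⟪e, w l⟫) ≤ ‖e‖ * sdiam ↑S w := by
  obtain ⟨i, hi, hmax⟩ := Finset.exists_mem_eq_sup' hS fun l => ⟪e, w l⟫
  obtain ⟨j, hj, hmin⟩ := Finset.exists_mem_eq_inf' hS fun l => ⟪e, w l⟫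
  rw [hmax, hmin, ← inner_sub_right]
  exact (real_inner_le_norm _ _).trans
    (mul_le_mul_of_nonneg_left (norm_sub_le_sdiam w hi hj) (norm_nonneg e))

end Diameter

theorem IsConsensusSolOn.sub_le_of_hypOne {n m D k : ℕ} (hm : 1 ≤ m) (hk : k < D)
    {ta : Fin n → Fin n → ℝ} {r : Fin n} {a : ℝ → Fin n → Fin n → ℝ}
    (ha0 : ∀ s i j, 0 ≤ a s i j) (hreg : ∀ s i, ∑ j, a s i j = (m : ℝ))
    {x : Fin n → ℝ → ℝ} {t τ M μ MS μS : ℝ} (hτ : 0 ≤ τ)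
    (hx : IsConsensusSolOn a x (Icc t (t + τ)))
    (hM : ∀ s ∈ Icc t (t + τ), ∀ l, x l s ≤ M) (hμ : ∀ s ∈ Icc t (t + τ), ∀ l, μ ≤ x l s)
    (hMS : ∀ j ∈ hierU ta r k, x j t ≤ MS) (hμS : ∀ j ∈ hierU ta r k, μS ≤ x j t)
    (hMSM : MS ≤ M) (hμμS : μ ≤ μS)
    (hhyp : ∀ u ∈ Icc t (t + τ), HypOne m D ta r (a u))
    {i j : Fin n} (hi : i ∈ hierU ta r (k + 1)) (hj : j ∈ hierU ta r (k + 1)) :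
    x i (t + τ) - x j (t + τ) ≤
      (1 - cfun m (hierAlpha ta r) k τ) * (M - μ) + cfun m (hierAlpha ta r) k τ * (MS - μS) := by
  have htt : t ∈ Icc t (t + τ) := ⟨le_rfl, by linarith⟩
  have hrS : μS ≤ MS := (hμS r (root_mem_hierU ta r k)).trans (hMS r (root_mem_hierU ta r k))
  rcases Nat.eq_zero_or_pos k with rfl | hk1
  · have hpair := hx.sub_le_of_common_neighbor (by positivity) ha0 hreg hτ hM hμ
      (fun s hs => (hhyp s hs).1 i hi) (fun s hs => (hhyp s hs).1 j hj)
    have hc0 : 0 ≤ cfun m (hierAlpha ta r) 0 τ := cfun_nonneg hτ fun h => absurd rfl h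
    have hcq := cfun_zero_le (α := hierAlpha ta r) (τ := τ) hm
    have hMμ : 0 ≤ M - μ := by linarith [hμ t htt r, hM t htt r]
    nlinarith
  · have hα : ∀ s ∈ Icc t (t + τ), ∀ i ∈ hierU ta r (k + 1),
        hierAlpha ta r k ≤ ∑ j ∈ hierU ta r k, a s i j :=
      fun s hs i hi => ((hhyp s hs).2 k hk1 (by omega) i hi).1
    have hup := hx.le_sub_mul_of_sum_ge ha0 hreg (hierU_subset_succ ta r k) hτ hM hMS hMSM hα
      i hi
    have hlow := hx.neg.le_sub_mul_of_sum_ge ha0 hreg (hierU_subset_succ ta r k) hτ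
      (M := -μ) (δ := -μS) (fun s hs l => neg_le_neg (hμ s hs l))
      (fun l hl => neg_le_neg (hμS l hl)) (neg_le_neg hμμS) hα j hj
    rw [cfun_of_ne_zero hk1.ne']
    linarith

theorem IsConsensusSolOn.sub_le_spread_of_hypOne {n m D k : ℕ} (hm : 1 ≤ m) (hk : k < D)
    {ta : Fin n → Fin n → ℝ} {r : Fin n} {a : ℝ → Fin n → Fin n → ℝ}
    (ha0 : ∀ s i j, 0 ≤ a s i j) (hreg : ∀ s i, ∑ j, a s i j = (m : ℝ))
    {x : Fin n → ℝ → ℝ} {t₀ t τ : ℝ} (ht₀ : t₀ ≤ t) (hτ : 0 ≤ τ)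
    (hx : IsConsensusSolOn a x (Icc t₀ (t + τ)))
    (hhyp : ∀ u ∈ Icc t (t + τ), HypOne m D ta r (a u))
    (hN : (Finset.univ : Finset (Fin n)).Nonempty) (hU : (hierU ta r k).Nonempty)
    {i j : Fin n} (hi : i ∈ hierU ta r (k + 1)) (hj : j ∈ hierU ta r (k + 1)) :
    x i (t + τ) - x j (t + τ) ≤
      (1 - cfun m (hierAlpha ta r) k τ) *
          (Finset.univ.sup' hN (x · t₀) - Finset.univ.inf' hN (x · t₀)) +
        cfun m (hierAlpha ta r) k τ *
          ((hierU ta r k).sup' hU (x · t) - (hierU ta r k).inf' hU (x · t)) := by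
  have hM := hx.le_of_forall_le ha0 (M := Finset.univ.sup' hN (x · t₀))
    fun l => Finset.le_sup' (x · t₀) (Finset.mem_univ l)
  have hμ := hx.le_of_forall_ge ha0 (μ := Finset.univ.inf' hN (x · t₀))
    fun l => Finset.inf'_le (x · t₀) (Finset.mem_univ l)
  have hsub : Icc t (t + τ) ⊆ Icc t₀ (t + τ) := Icc_subset_Icc_left ht₀
  have htt : t ∈ Icc t₀ (t + τ) := ⟨ht₀, by linarith⟩
  exact (hx.mono hsub).sub_le_of_hypOne hm hk ha0 hreg hτ
    (fun s hs => hM s (hsub hs)) (fun s hs => hμ s (hsub hs))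
    (fun l hl => Finset.le_sup' (x · t) hl) (fun l hl => Finset.inf'_le (x · t) hl)
    (Finset.sup'_le hU _ fun l _ => hM t htt l) (Finset.le_inf' hU _ fun l _ => hμ t htt l)
    hhyp hi hj

theorem stmt3_general {n d : ℕ} (m D : ℕ) (hm : 1 ≤ m)
    (ta : Fin n → Fin n → ℝ) (hta : ∀ i j, ta i j = 0 ∨ ta i j = 1)
    (r : Fin n)
    (a : ℝ → Fin n → Fin n → ℝ)
    (ha01 : ∀ t i j, a t i j = 0 ∨ a t i j = 1)
    (hreg : ∀ t i, ∑ j, a t i j = (m : ℝ))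
    (v : ℝ → Fin n → EuclideanSpace ℝ (Fin d))
    (k : ℕ) (hk : k < D)
    (t0 t τ : ℝ) (ht0 : t0 ≤ t) (hτ : 0 ≤ τ)
    (htraj : ∀ i : Fin n, ∀ u ∈ Set.Icc t0 (t + τ),
      HasDerivAt (fun w => v w i) (∑ j, a u i j • (v u j - v u i)) u)
    (hhyp : ∀ u ∈ Set.Icc t (t + τ), HypOne m D ta r (a u)) :
    sdiam ↑(hierU ta r (k + 1)) (v (t + τ)) ≤
      sdiam Set.univ (v t0) -
        cfun m (hierAlpha ta r) k τ *
          (sdiam Set.univ (v t0) - sdiam ↑(hierU ta r k) (v t)) := by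
  have ha0 : ∀ u i j, 0 ≤ a u i j := fun u i j => by rcases ha01 u i j with h | h <;> simp [h]
  have hta0 : ∀ i j, 0 ≤ ta i j := fun i j => by rcases hta i j with h | h <;> simp [h]
  set c := cfun m (hierAlpha ta r) k τ
  have hc0 : 0 ≤ c := cfun_nonneg hτ fun _ => hierAlpha_nonneg hta0 r k
  have hc1 : c ≤ 1 := cfun_le_one hτ fun hk0 => (hhyp t ⟨le_rfl, by linarith⟩).hierAlpha_le
    (ha0 t) (hreg t) (Nat.pos_of_ne_zero hk0) (by omega)
  have hN : (Finset.univ : Finset (Fin n)).Nonempty := ⟨r, Finset.mem_univ r⟩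
  have hU : (hierU ta r k).Nonempty := ⟨r, root_mem_hierU ta r k⟩
  have hC : 0 ≤ (1 - c) * sdiam Set.univ (v t0) + c * sdiam ↑(hierU ta r k) (v t) :=
    add_nonneg (mul_nonneg (by linarith) (sdiam_nonneg _ _)) (mul_nonneg hc0 (sdiam_nonneg _ _))
  refine (sdiam_le hC fun i hi j hj => norm_le_of_forall_inner_le hC fun e => ?_).trans_eq
    (by ring)
  have hstep := (isConsensusSolOn_inner htraj e).sub_le_spread_of_hypOne hm hk ha0 hreg
    ht0 hτ hhyp hN hU hi hj
  have hN_diam := finset_sup'_sub_inf'_inner_le hN (v t0) e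
  have hU_diam := finset_sup'_sub_inf'_inner_le hU (v t) e
  rw [Finset.coe_univ] at hN_diam
  rw [inner_sub_right]
  calc _ ≤ _ := hstep
    _ ≤ (1 - c) * (‖e‖ * sdiam Set.univ (v t0)) + c * (‖e‖ * sdiam ↑(hierU ta r k) (v t)) := by
      gcongr
    _ = _ := by ring

/-- Lemma 4: for `k ∈ {0, …, D-1}`, times `t₀ ≤ t` and `τ ≥ 0`, if the interaction
graph satisfies Hypothesis 1 on `[t, t+τ]`, then
`Δ_{U_{k+1}}(t+τ) ≤ Δ_N(t₀) - c_k(τ) (Δ_N(t₀) - Δ_{U_k}(t))`. -/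
theorem stmt3 {n d : ℕ} (m D : ℕ) (hm : 1 ≤ m)
    (ta : Fin n → Fin n → ℝ) (hta : ∀ i j, ta i j = 0 ∨ ta i j = 1)
    (r : Fin n)
    (hspan : hierU ta r D = Finset.univ)
    (hdepth : ∀ k < D, hierU ta r k ≠ Finset.univ)
    (a : ℝ → Fin n → Fin n → ℝ)
    (ha01 : ∀ t i j, a t i j = 0 ∨ a t i j = 1)
    (hreg : ∀ t i, ∑ j, a t i j = (m : ℝ))
    (v : ℝ → Fin n → EuclideanSpace ℝ (Fin d))
    (k : ℕ) (hk : k < D)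
    (t0 t τ : ℝ) (ht0 : t0 ≤ t) (hτ : 0 ≤ τ)
    (htraj : ∀ i : Fin n, ∀ u ∈ Set.Icc t0 (t + τ),
      HasDerivAt (fun w => v w i) (∑ j, a u i j • (v u j - v u i)) u)
    (hhyp : ∀ u ∈ Set.Icc t (t + τ), HypOne m D ta r (a u)) :
    sdiam ↑(hierU ta r (k + 1)) (v (t + τ)) ≤
      sdiam Set.univ (v t0) -
        cfun m (hierAlpha ta r) k τ *
          (sdiam Set.univ (v t0) - sdiam ↑(hierU ta r k) (v t)) :=
  stmt3_general m D hm ta hta r a ha01 hreg v k hk t0 t τ ht0 hτ htraj hhyp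
end

section
/- Let x^0 ∈ (ℝ^d)^n be a reference position vector, ρ ≥ 0, and let y ∈ (ℝ^d)^n be a disturbed position vector satisfying ‖(y_j − y_i) − (x_j^0 − x_i^0)‖ ≤ ρ for all i, j ∈ N. Then every edge of the graph H_ρ (defined from x^0 and ρ) is an edge of the topological interaction graph G_y determined by the positions y; that is, H_ρ ⊆ G_y. -/
/-- Lemma 7 (preservation of the subgraph). If the disturbed positions `y` satisfy
`‖(y j - y i) - (x⁰ j - x⁰ i)‖ ≤ ρ` for all `i, j`, then every edge `(j, i)` of the graph
`H_ρ` (built from `x⁰` and `ρ`) is an edge of the topological interaction graph `G_y`. -/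
theorem stmt4 {n d m : ℕ} (hm : 1 ≤ m)
    (x0 y : Fin n → EuclideanSpace ℝ (Fin d)) (ρ : ℝ) (hρ : 0 ≤ ρ)
    (hdist : ∀ i j : Fin n, ‖(y j - y i) - (x0 j - x0 i)‖ ≤ ρ) :
    ∀ i j : Fin n,
      {k : Fin n | ‖x0 i - x0 j‖ > ‖x0 i - x0 k‖ - 2 * ρ}.ncard < m →
      {k : Fin n | ‖y i - y j‖ > ‖y i - y k‖}.ncard < m := by
  intro i j h
  refine lt_of_le_of_lt (Set.ncard_le_ncard ?_ (Set.toFinite _)) h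
  intro k hk
  simp only [Set.mem_setOf_eq, gt_iff_lt] at hk ⊢
  have key : ∀ a b : Fin n, |‖y a - y b‖ - ‖x0 a - x0 b‖| ≤ ρ := by
    intro a b
    rw [abs_sub_le_iff]
    constructor
    · calc ‖y a - y b‖ - ‖x0 a - x0 b‖ ≤ ‖(y a - y b) - (x0 a - x0 b)‖ :=
            norm_sub_norm_le _ _
        _ = ‖(y b - y a) - (x0 b - x0 a)‖ := by rw [← norm_neg]; congr 1; abel
        _ ≤ ρ := hdist a b
    · calc ‖x0 a - x0 b‖ - ‖y a - y b‖ ≤ ‖(x0 a - x0 b) - (y a - y b)‖ :=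
            norm_sub_norm_le _ _
        _ = ‖(y a - y b) - (x0 a - x0 b)‖ := by rw [← norm_neg]; congr 1; abel
        _ ≤ ρ := hdist b a
  have h1 := abs_le.1 (key i j)
  have h2 := abs_le.1 (key i k)
  linarith [h1.1, h1.2, h2.1, h2.2]
end

section
/- Let m ≥ 1 and D ≥ 2 be integers and α_1,…,α_{D−1} reals with 1 ≤ α_k ≤ m. Then the maximal value of the ratio c(τ)/T(τ) over τ ∈ (ℝ_{>0})^D is attained at τ̃ = (τ̃_0,…,τ̃_{D−1}) given by τ̃_0 = (1/(m+1))·ln((m+1)T̃ + 1) and τ̃_k = (1/α_k)·ln((mT̃ + 1)/((m − α_k)T̃ + 1)) for k ∈ {1,…,D−1}, where T̃ = T(τ̃) is the unique positive solution of the equation e^T = ((m+1)T + 1)^{1/(m+1)} · Π_{k=1}^{D−1} ((mT + 1)/((m − α_k)T + 1))^{1/α_k}. -/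
noncomputable def cprod (m D : ℕ) (α : ℕ → ℝ) (τ : ℕ → ℝ) : ℝ :=
  ∏ k ∈ Finset.range D, cfun m α k (τ k)

def Tsum (D : ℕ) (τ : ℕ → ℝ) : ℝ :=
  ∑ k ∈ Finset.range D, τ k

open Real

section

open Set

theorem strictAntiOn_div_exp_sub_one : StrictAntiOn (fun x => x / (exp x - 1)) (Ioi 0) := by
  intro x (hx : 0 < x) y (hy : 0 < y) hxy
  have hslope : (exp x - 1) / x < (exp y - 1) / y := by
    simpa using strictConvexOn_exp.secant_strict_mono (a := 0) (mem_univ _) (mem_univ _)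
      (mem_univ _) hx.ne' hy.ne' hxy
  have hpos : 0 < (exp x - 1) / x := div_pos (by linarith [add_one_lt_exp hx.ne']) hx
  simpa only [inv_div] using inv_strictAnti₀ hpos hslope

theorem le_mul_rpow_of_antitoneOn_elasticity {g g' : ℝ → ℝ}
    (hg : ∀ x, 0 < x → HasDerivAt g (g' x) x) (hg₀ : ∀ x, 0 < x → 0 < g x)
    (hε : AntitoneOn (fun x => x * g' x / g x) (Ioi 0)) {x₀ x : ℝ} (hx₀ : 0 < x₀)
    (hx : 0 < x) : g x ≤ g x₀ * (x / x₀) ^ (x₀ * g' x₀ / g x₀) := by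
  set e := x₀ * g' x₀ / g x₀
  set φ : ℝ → ℝ := fun y => log (g y) - e * log y
  have hφ : ∀ y, 0 < y → HasDerivAt φ ((y * g' y / g y - e) / y) y := by
    intro y hy
    refine (((hg y hy).log (hg₀ y hy).ne').sub ((hasDerivAt_log hy.ne').const_mul e)).congr_deriv ?_
    field_simp [(hg₀ y hy).ne']
  have hφc : ContinuousOn φ (Ioi 0) := fun y hy => (hφ y hy).continuousAt.continuousWithinAt
  have hφx : φ x ≤ φ x₀ := by
    rcases le_total x x₀ with h | h
    · refine monotoneOn_of_hasDerivWithinAt_nonneg (convex_Ioc 0 x₀)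
        (hφc.mono Ioc_subset_Ioi_self) (fun y hy => (hφ y ?_).hasDerivWithinAt)
        (fun y hy => ?_) ⟨hx, h⟩ ⟨hx₀, le_rfl⟩ h
      · rw [interior_Ioc] at hy; exact hy.1
      · rw [interior_Ioc] at hy
        exact div_nonneg (sub_nonneg.2 (hε hy.1 hx₀ hy.2.le)) hy.1.le
    · refine antitoneOn_of_hasDerivWithinAt_nonpos (convex_Ici x₀)
        (hφc.mono fun y hy => hx₀.trans_le hy) (fun y hy => (hφ y ?_).hasDerivWithinAt)
        (fun y hy => ?_) self_mem_Ici h h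
      · rw [interior_Ici] at hy; exact hx₀.trans hy
      · rw [interior_Ici] at hy
        exact div_nonpos_of_nonpos_of_nonneg (sub_nonpos.2 (hε hx₀ (hx₀.trans hy) hy.le))
          (hx₀.trans hy).le
  have hpos := hg₀ x₀ hx₀
  rw [← log_le_log_iff (hg₀ x hx) (by positivity), log_mul hpos.ne' (by positivity),
    log_rpow (by positivity), log_div hx.ne' hx₀.ne']
  simp only [φ] at hφx
  linarith

theorem one_sub_exp_le_mul_rpow {a T t₀ t : ℝ} (ha : 0 < a) (hT : 0 < T)
    (ht₀ : exp (a * t₀) = a * T + 1) (ht : 0 < t) :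
    1 - exp (-a * t) ≤ (1 - exp (-a * t₀)) * (t / t₀) ^ (t₀ / T) := by
  have ht₀pos : 0 < t₀ := pos_of_mul_pos_right (one_lt_exp_iff.1 (by rw [ht₀]; nlinarith)) ha.le
  have hpos : ∀ x, 0 < x → 0 < 1 - exp (-a * x) := fun x hx => by
    nlinarith [exp_lt_one_iff.2 (by nlinarith : -a * x < 0)]
  have hε : ∀ x, 0 < x →
      x * (a * exp (-a * x)) / (1 - exp (-a * x)) = a * x / (exp (a * x) - 1) := by
    intro x hx
    have hE : 1 < exp (a * x) := one_lt_exp_iff.2 (mul_pos ha hx)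
    rw [neg_mul, exp_neg]
    field_simp [(by linarith : exp (a * x) - 1 ≠ 0)]
  have key := le_mul_rpow_of_antitoneOn_elasticity (g := fun x => 1 - exp (-a * x))
    (g' := fun x => a * exp (-a * x))
    (fun x _ => (((hasDerivAt_id x).const_mul (-a)).exp.const_sub 1).congr_deriv
      (by simp [mul_comm]))
    hpos (fun x hx y hy hxy => by
      simp only [hε x hx, hε y hy]
      exact strictAntiOn_div_exp_sub_one.antitoneOn (mul_pos ha hx) (mul_pos ha hy)
        (by gcongr)) ht₀pos ht
  rwa [hε t₀ ht₀pos, ht₀, add_sub_cancel_right, mul_div_mul_left _ _ ha.ne'] at key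

theorem exp_neg_mul_exp_sub_one_le_mul_rpow {M A T t₀ t : ℝ} (hA : 0 < A) (hAM : A ≤ M)
    (hT : 0 < T) (ht₀ : exp (A * t₀) = (M * T + 1) / ((M - A) * T + 1)) (ht : 0 < t) :
    exp (-M * t) * (exp (A * t) - 1) ≤
      exp (-M * t₀) * (exp (A * t₀) - 1) * (t / t₀) ^ (t₀ / T) := by
  have hB : 0 < (M - A) * T + 1 := by nlinarith
  have ht₀pos : 0 < t₀ := by
    refine pos_of_mul_pos_right (one_lt_exp_iff.1 ?_) hA.le
    rw [ht₀, one_lt_div hB]; nlinarith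
  have hpos : ∀ x, 0 < x → 0 < exp (A * x) - 1 := fun x hx => by
    nlinarith [add_one_lt_exp (mul_pos hA hx).ne']
  have hε : ∀ x, 0 < x → x * (-M * exp (-M * x) * (exp (A * x) - 1) +
      exp (-M * x) * (A * exp (A * x))) / (exp (-M * x) * (exp (A * x) - 1)) =
      (A - M) * x + A * x / (exp (A * x) - 1) := by
    intro x hx
    have hE := (hpos x hx).ne'
    generalize exp (A * x) = E at hE ⊢
    field_simp [(exp_pos (-M * x)).ne']
    ring
  have key := le_mul_rpow_of_antitoneOn_elasticity
    (g := fun x => exp (-M * x) * (exp (A * x) - 1))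
    (g' := fun x => -M * exp (-M * x) * (exp (A * x) - 1) + exp (-M * x) * (A * exp (A * x)))
    (fun x _ => ((((hasDerivAt_id x).const_mul (-M)).exp).mul
      (((hasDerivAt_id x).const_mul A).exp.sub_const 1)).congr_deriv (by simp; ring))
    (fun x hx => mul_pos (exp_pos _) (hpos x hx)) (fun x hx y hy hxy => by
      simp only [hε x hx, hε y hy]
      have := strictAntiOn_div_exp_sub_one.antitoneOn (mul_pos hA hx) (mul_pos hA hy)
        (by gcongr)
      nlinarith) ht₀pos ht
  have hval : (A - M) * t₀ + A * t₀ / (exp (A * t₀) - 1) = t₀ / T := by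
    have hR : exp (A * t₀) - 1 = A * T / ((M - A) * T + 1) := by
      rw [ht₀, div_sub_one hB.ne']; ring
    rw [hR]
    field_simp
    ring
  rwa [hε t₀ ht₀pos, hval] at key

theorem hasDerivAt_log_div_affine {a b x : ℝ} (ha : 0 < a * x + 1) (hb : 0 < b * x + 1) :
    HasDerivAt (fun T => log ((a * T + 1) / (b * T + 1)))
      ((a - b) / ((a * x + 1) * (b * x + 1))) x := by
  have hd := ((((hasDerivAt_id x).const_mul a).add_const 1).div
    (((hasDerivAt_id x).const_mul b).add_const 1) hb.ne').log (div_pos ha hb).ne'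
  simp only [id, Pi.div_apply] at hd
  refine hd.congr_deriv ?_
  field_simp
  ring

theorem strictConcaveOn_mul_log_div_affine {c a b : ℝ} (hc : 0 < c) (hb : 0 ≤ b) (hba : b < a) :
    StrictConcaveOn ℝ (Ici 0) fun T => c * log ((a * T + 1) / (b * T + 1)) := by
  have hpos : ∀ x : ℝ, 0 ≤ x → 0 < a * x + 1 ∧ 0 < b * x + 1 := fun x hx =>
    ⟨by nlinarith, by nlinarith⟩
  have hd : ∀ x : ℝ, 0 ≤ x → HasDerivAt (fun T => c * log ((a * T + 1) / (b * T + 1)))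
      (c * ((a - b) / ((a * x + 1) * (b * x + 1)))) x := fun x hx =>
    (hasDerivAt_log_div_affine (hpos x hx).1 (hpos x hx).2).const_mul c
  refine StrictAntiOn.strictConcaveOn_of_deriv (convex_Ici 0)
    (fun x hx => (hd x hx).continuousAt.continuousWithinAt) ?_
  rw [interior_Ici]
  intro x (hx : 0 < x) y (hy : 0 < y) hxy
  rw [(hd x hx.le).deriv, (hd y hy.le).deriv]
  obtain ⟨hax, hbx⟩ := hpos x hx.le
  have hden : (a * x + 1) * (b * x + 1) < (a * y + 1) * (b * y + 1) :=
    mul_lt_mul (by nlinarith) (by nlinarith) hbx (hpos y hy.le).1.le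
  exact mul_lt_mul_of_pos_left (div_lt_div_of_pos_left (by linarith) (by positivity) hden) hc

theorem StrictConcaveOn.eq_of_map_eq_zero {f : ℝ → ℝ} (hf : StrictConcaveOn ℝ (Ici 0) f)
    (h₀ : f 0 = 0) {a b : ℝ} (ha : 0 < a) (hb : 0 < b) (hfa : f a = 0) (hfb : f b = 0) :
    a = b := by
  by_contra hne
  wlog hab : a < b generalizing a b
  · exact this hb ha hfb hfa (Ne.symm hne) (lt_of_le_of_ne (not_lt.1 hab) (Ne.symm hne))
  have := hf.secant_strict_mono (a := 0) self_mem_Ici ha.le hb.le ha.ne' hb.ne' hab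
  simp [h₀, hfa, hfb] at this

end

open Finset

theorem Finset.strictConcaveOn_sum {ι : Type*} {s : Finset ι} (hs : s.Nonempty) {S : Set ℝ}
    {f : ι → ℝ → ℝ} (hf : ∀ i ∈ s, StrictConcaveOn ℝ S (f i)) :
    StrictConcaveOn ℝ S fun x => ∑ i ∈ s, f i x := by
  induction hs using Finset.Nonempty.cons_induction with
  | singleton i => simpa using hf i (mem_singleton_self i)
  | cons i s _ _ ih =>
    simp only [sum_cons]
    exact (hf i (mem_cons_self i s)).add (ih fun j hj => hf j (mem_cons_of_mem hj))

theorem prod_div_sum_le_prod_div_sum {ι : Type*} {s : Finset ι} (hs : s.Nonempty)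
    {a b t t₀ : ι → ℝ} (ha : ∀ i ∈ s, 0 ≤ a i) (hb : ∀ i ∈ s, 0 ≤ b i)
    (ht : ∀ i ∈ s, 0 < t i) (ht₀ : ∀ i ∈ s, 0 < t₀ i)
    (h : ∀ i ∈ s, a i ≤ b i * (t i / t₀ i) ^ (t₀ i / ∑ j ∈ s, t₀ j)) :
    (∏ i ∈ s, a i) / ∑ i ∈ s, t i ≤ (∏ i ∈ s, b i) / ∑ i ∈ s, t₀ i := by
  set T₀ := ∑ j ∈ s, t₀ j
  have hT₀ : 0 < T₀ := sum_pos ht₀ hs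
  have hT : 0 < ∑ i ∈ s, t i := sum_pos ht hs
  have hamgm : ∏ i ∈ s, (t i / t₀ i) ^ (t₀ i / T₀) ≤ (∑ i ∈ s, t i) / T₀ := by
    calc ∏ i ∈ s, (t i / t₀ i) ^ (t₀ i / T₀)
        ≤ ∑ i ∈ s, t₀ i / T₀ * (t i / t₀ i) :=
          geom_mean_le_arith_mean_weighted s _ _ (fun i hi => (div_pos (ht₀ i hi) hT₀).le)
            (by rw [← sum_div, div_self hT₀.ne']) fun i hi => (div_pos (ht i hi) (ht₀ i hi)).le
      _ = (∑ i ∈ s, t i) / T₀ := by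
          rw [sum_div]
          refine sum_congr rfl fun i hi => ?_
          field_simp [(ht₀ i hi).ne']
  have hprod : ∏ i ∈ s, a i ≤ (∏ i ∈ s, b i) * ((∑ i ∈ s, t i) / T₀) :=
    calc ∏ i ∈ s, a i ≤ ∏ i ∈ s, b i * (t i / t₀ i) ^ (t₀ i / T₀) := prod_le_prod ha h
      _ = (∏ i ∈ s, b i) * ∏ i ∈ s, (t i / t₀ i) ^ (t₀ i / T₀) := prod_mul_distrib
      _ ≤ (∏ i ∈ s, b i) * ((∑ i ∈ s, t i) / T₀) :=
          mul_le_mul_of_nonneg_left hamgm (prod_nonneg hb)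
  rw [div_le_div_iff₀ hT hT₀]
  calc (∏ i ∈ s, a i) * T₀ ≤ (∏ i ∈ s, b i) * ((∑ i ∈ s, t i) / T₀) * T₀ :=
        mul_le_mul_of_nonneg_right hprod hT₀.le
    _ = (∏ i ∈ s, b i) * ∑ i ∈ s, t i := by field_simp

-- `optTau m α T k` is the paper's `τ̃_k`, with `T̃` replaced by a free variable `T`.
noncomputable def optTau (m : ℕ) (α : ℕ → ℝ) (T : ℝ) (k : ℕ) : ℝ :=
  if k = 0 then 1 / ((m : ℝ) + 1) * log (((m : ℝ) + 1) * T + 1)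
  else 1 / α k * log (((m : ℝ) * T + 1) / (((m : ℝ) - α k) * T + 1))

section optTau

variable {m : ℕ} {α : ℕ → ℝ} {k : ℕ} {T : ℝ}

theorem optTau_pos (hα : k ≠ 0 → 0 < α k ∧ α k ≤ m) (hT : 0 < T) : 0 < optTau m α T k := by
  unfold optTau
  split_ifs with hk
  · exact mul_pos (by positivity) (log_pos (by nlinarith [(Nat.cast_nonneg m : (0 : ℝ) ≤ m)]))
  · obtain ⟨hα₀, hαm⟩ := hα hk
    have hB : 0 < ((m : ℝ) - α k) * T + 1 := by nlinarith
    exact mul_pos (by positivity) (log_pos ((one_lt_div hB).2 (by nlinarith)))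

theorem strictConcaveOn_optTau (hα : k ≠ 0 → 0 < α k ∧ α k ≤ m) :
    StrictConcaveOn ℝ (Set.Ici 0) fun T => optTau m α T k := by
  rcases eq_or_ne k 0 with rfl | hk
  · simpa [optTau] using strictConcaveOn_mul_log_div_affine (c := 1 / ((m : ℝ) + 1))
      (a := (m : ℝ) + 1) (b := 0) (by positivity) le_rfl (by positivity)
  · obtain ⟨hα₀, hαm⟩ := hα hk
    simpa [optTau, hk] using strictConcaveOn_mul_log_div_affine (c := 1 / α k) (a := m)
      (b := m - α k) (by positivity) (by linarith) (by linarith)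

theorem cfun_pos (hα : k ≠ 0 → 0 < α k) {t : ℝ} (ht : 0 < t) : 0 < cfun m α k t := by
  unfold cfun
  split_ifs with hk
  · have : exp (-((m : ℝ) + 1) * t) < 1 := exp_lt_one_iff.2 (by nlinarith)
    exact mul_pos (by positivity) (by linarith)
  · exact mul_pos (exp_pos _) (by linarith [one_lt_exp_iff.2 (mul_pos (hα hk) ht)])

theorem cfun_le_mul_rpow (hα : k ≠ 0 → 0 < α k ∧ α k ≤ m) (hT : 0 < T) {t : ℝ} (ht : 0 < t) :
    cfun m α k t ≤ cfun m α k (optTau m α T k) *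
      (t / optTau m α T k) ^ (optTau m α T k / T) := by
  rcases eq_or_ne k 0 with rfl | hk
  · have ht₀ : exp (((m : ℝ) + 1) * optTau m α T 0) = ((m : ℝ) + 1) * T + 1 := by
      rw [optTau, if_pos rfl, ← mul_assoc, mul_one_div_cancel (by positivity), one_mul,
        exp_log (by positivity)]
    simp only [cfun, if_pos, mul_assoc]
    exact mul_le_mul_of_nonneg_left (one_sub_exp_le_mul_rpow (by positivity) hT ht₀ ht)
      (by positivity)
  · obtain ⟨hα₀, hαm⟩ := hα hk
    have ht₀ : exp (α k * optTau m α T k) = ((m : ℝ) * T + 1) / (((m : ℝ) - α k) * T + 1) := by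
      rw [optTau, if_neg hk, ← mul_assoc, mul_one_div_cancel hα₀.ne', one_mul,
        exp_log (div_pos (by positivity) (by nlinarith))]
    simp only [cfun, if_neg hk]
    exact exp_neg_mul_exp_sub_one_le_mul_rpow hα₀ hαm hT ht₀ ht

end optTau

section fixedPoint

variable {m D : ℕ} {α : ℕ → ℝ}

theorem sum_optTau_eq_of_exp_eq (hD : 1 ≤ D) (hα : ∀ k ∈ Icc 1 (D - 1), α k ≤ m) {T : ℝ}
    (hT : 0 ≤ T)
    (h : exp T = (((m : ℝ) + 1) * T + 1) ^ (1 / ((m : ℝ) + 1)) *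
      ∏ k ∈ Icc 1 (D - 1), (((m : ℝ) * T + 1) / (((m : ℝ) - α k) * T + 1)) ^ (1 / α k)) :
    ∑ k ∈ range D, optTau m α T k = T := by
  have hA : 0 < ((m : ℝ) + 1) * T + 1 := by positivity
  have hB : ∀ k ∈ Icc 1 (D - 1), 0 < ((m : ℝ) * T + 1) / (((m : ℝ) - α k) * T + 1) :=
    fun k hk => div_pos (by positivity) (by nlinarith [hα k hk])
  have hrange : range D = insert 0 (Icc 1 (D - 1)) := by
    ext k; simp only [mem_range, mem_insert, mem_Icc]; omega
  calc ∑ k ∈ range D, optTau m α T k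
      = optTau m α T 0 + ∑ k ∈ Icc 1 (D - 1), optTau m α T k := by
        rw [hrange, sum_insert (by simp)]
    _ = log (exp T) := by
        rw [h, log_mul (rpow_pos_of_pos hA _).ne'
          (prod_pos fun k hk => rpow_pos_of_pos (hB k hk) _).ne', log_rpow hA,
          log_prod fun k hk => (rpow_pos_of_pos (hB k hk) _).ne']
        congr 1
        refine sum_congr rfl fun k hk => ?_
        rw [log_rpow (hB k hk), optTau, if_neg (by simp at hk; omega)]
    _ = T := log_exp T

theorem strictConcaveOn_sum_optTau_sub (hD : 1 ≤ D)
    (hα : ∀ k ∈ Icc 1 (D - 1), 0 < α k ∧ α k ≤ m) :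
    StrictConcaveOn ℝ (Set.Ici 0) fun T => ∑ k ∈ range D, optTau m α T k - T :=
  (strictConcaveOn_sum (nonempty_range_iff.2 (by omega)) fun k hk =>
    strictConcaveOn_optTau fun hk₀ => hα k (by simp at hk ⊢; omega)).sub_convexOn
    (convexOn_id (convex_Ici 0))

theorem cprod_div_Tsum_le_of_eq_optTau (hD : 1 ≤ D)
    (hα : ∀ k < D, k ≠ 0 → 0 < α k ∧ α k ≤ m) {τ₀ : ℕ → ℝ} (hT : 0 < Tsum D τ₀)
    (hτ₀ : ∀ k < D, τ₀ k = optTau m α (Tsum D τ₀) k) {τ : ℕ → ℝ} (hτ : ∀ k < D, 0 < τ k) :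
    cprod m D α τ / Tsum D τ ≤ cprod m D α τ₀ / Tsum D τ₀ := by
  have hτ₀pos : ∀ k < D, 0 < τ₀ k := fun k hk => hτ₀ k hk ▸ optTau_pos (hα k hk) hT
  simp only [← mem_range] at hα hτ₀ hτ₀pos hτ
  refine prod_div_sum_le_prod_div_sum (nonempty_range_iff.2 (by omega))
    (fun k hk => (cfun_pos (fun hk₀ => (hα k hk hk₀).1) (hτ k hk)).le)
    (fun k hk => (cfun_pos (fun hk₀ => (hα k hk hk₀).1) (hτ₀pos k hk)).le) hτ hτ₀pos
    fun k hk => ?_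
  have hbound := cfun_le_mul_rpow (hα k hk) hT (hτ k hk)
  rwa [← hτ₀ k hk] at hbound

end fixedPoint

theorem stmt10_general (m D : ℕ) (hD : 2 ≤ D)
    (α : ℕ → ℝ) (hα : ∀ k ∈ Finset.Icc 1 (D - 1), 1 ≤ α k ∧ α k ≤ (m : ℝ))
    (Tt : ℝ) (hTt : 0 < Tt)
    (heq : Real.exp Tt = (((m : ℝ) + 1) * Tt + 1) ^ (1 / ((m : ℝ) + 1)) *
      ∏ k ∈ Finset.Icc 1 (D - 1),
        (((m : ℝ) * Tt + 1) / (((m : ℝ) - α k) * Tt + 1)) ^ (1 / α k))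
    (τt : ℕ → ℝ)
    (hτ0 : τt 0 = (1 / ((m : ℝ) + 1)) * Real.log (((m : ℝ) + 1) * Tt + 1))
    (hτk : ∀ k ∈ Finset.Icc 1 (D - 1),
      τt k = (1 / α k) * Real.log (((m : ℝ) * Tt + 1) / (((m : ℝ) - α k) * Tt + 1))) :
    (∀ T' : ℝ, 0 < T' →
      Real.exp T' = (((m : ℝ) + 1) * T' + 1) ^ (1 / ((m : ℝ) + 1)) *
        ∏ k ∈ Finset.Icc 1 (D - 1),
          (((m : ℝ) * T' + 1) / (((m : ℝ) - α k) * T' + 1)) ^ (1 / α k) → T' = Tt) ∧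
    Tsum D τt = Tt ∧ (∀ k < D, 0 < τt k) ∧
    ∀ τ : ℕ → ℝ, (∀ k < D, 0 < τ k) →
      cprod m D α τ / Tsum D τ ≤ cprod m D α τt / Tsum D τt := by
  have hα' : ∀ k ∈ Icc 1 (D - 1), 0 < α k ∧ α k ≤ m := fun k hk =>
    ⟨by linarith [(hα k hk).1], (hα k hk).2⟩
  have hαk : ∀ k < D, k ≠ 0 → 0 < α k ∧ α k ≤ m := fun k hk hk₀ =>
    hα' k (mem_Icc.2 ⟨by omega, by omega⟩)
  have hfix := fun T (hT : 0 < T) =>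
    sum_optTau_eq_of_exp_eq (by omega) (fun k hk => (hα' k hk).2) hT.le
  have hτt : ∀ k < D, τt k = optTau m α Tt k := by
    intro k hk
    rcases eq_or_ne k 0 with rfl | hk₀
    · rw [hτ0, optTau, if_pos rfl]
    · rw [hτk k (mem_Icc.2 ⟨by omega, by omega⟩), optTau, if_neg hk₀]
  have hTsum : Tsum D τt = Tt := by
    rw [Tsum, sum_congr rfl fun k hk => hτt k (mem_range.1 hk)]
    exact hfix Tt hTt heq
  refine ⟨fun T' hT' h' => ?_, hTsum, fun k hk => hτt k hk ▸ optTau_pos (hαk k hk) hTt,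
    fun τ hτ => cprod_div_Tsum_le_of_eq_optTau (by omega) hαk (hTsum ▸ hTt)
      (by rwa [hTsum]) hτ⟩
  exact (strictConcaveOn_sum_optTau_sub (by omega) hα').eq_of_map_eq_zero (by simp [optTau])
    hT' hTt (sub_eq_zero.2 (hfix T' hT' h')) (sub_eq_zero.2 (hfix Tt hTt heq))

/-- Proposition 12: the maximum of `c(τ)/T(τ)` over `τ ∈ (ℝ>0)^D` is attained at the
point `τ̃` given by `τ̃₀ = (1/(m+1)) ln((m+1)T̃+1)` and
`τ̃_k = (1/α_k) ln((mT̃+1)/((m-α_k)T̃+1))`, where `T̃ = T(τ̃)` is the unique positive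
solution of `e^T = ((m+1)T+1)^{1/(m+1)} ∏_k ((mT+1)/((m-α_k)T+1))^{1/α_k}`. -/
theorem stmt10 (m D : ℕ) (hm : 1 ≤ m) (hD : 2 ≤ D)
    (α : ℕ → ℝ) (hα : ∀ k ∈ Finset.Icc 1 (D - 1), 1 ≤ α k ∧ α k ≤ (m : ℝ))
    (Tt : ℝ) (hTt : 0 < Tt)
    (heq : Real.exp Tt = (((m : ℝ) + 1) * Tt + 1) ^ (1 / ((m : ℝ) + 1)) *
      ∏ k ∈ Finset.Icc 1 (D - 1),
        (((m : ℝ) * Tt + 1) / (((m : ℝ) - α k) * Tt + 1)) ^ (1 / α k))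
    (τt : ℕ → ℝ)
    (hτ0 : τt 0 = (1 / ((m : ℝ) + 1)) * Real.log (((m : ℝ) + 1) * Tt + 1))
    (hτk : ∀ k ∈ Finset.Icc 1 (D - 1),
      τt k = (1 / α k) * Real.log (((m : ℝ) * Tt + 1) / (((m : ℝ) - α k) * Tt + 1))) :
    (∀ T' : ℝ, 0 < T' →
      Real.exp T' = (((m : ℝ) + 1) * T' + 1) ^ (1 / ((m : ℝ) + 1)) *
        ∏ k ∈ Finset.Icc 1 (D - 1),
          (((m : ℝ) * T' + 1) / (((m : ℝ) - α k) * T' + 1)) ^ (1 / α k) → T' = Tt) ∧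
    Tsum D τt = Tt ∧ (∀ k < D, 0 < τt k) ∧
    ∀ τ : ℕ → ℝ, (∀ k < D, 0 < τ k) →
      cprod m D α τ / Tsum D τ ≤ cprod m D α τt / Tsum D τt :=
  stmt10_general m D hD α hα Tt hTt heq τt hτ0 hτk
end

section
/- Let m ≥ 1 and D ≥ 2 be integers and α_1,…,α_{D−1} reals with 1 ≤ α_k ≤ m. Then the equation T = (1/(m+1))·ln((m+1)T + 1) + Σ_{k=1}^{D−1} (1/α_k)·ln((mT + 1)/((m − α_k)T + 1)) has exactly one solution T > 0 (the only other nonnegative solution being T = 0). -/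
open Real Set Filter Topology Asymptotics

/-!
Write `g T = logRhs T - T`. Then `g 0 = 0`, and on `[0, ∞)` the derivative of `logRhs` is
`1/((m+1)T+1) + ∑ₖ 1/((mT+1)((m-αₖ)T+1))`, which is strictly decreasing, so `g` is strictly
concave. Its slope at `0` is `D - 1 > 0`, so `g > 0` just right of `0`, while `logRhs` grows only
logarithmically, so `g < 0` eventually. A strictly concave function vanishing at `0` has at most
one positive zero (secant slopes from `0` strictly decrease), and the intermediate value theorem
provides one.
-/

theorem StrictConcaveOn.existsUnique_pos_eq_zero {g : ℝ → ℝ} (hg : StrictConcaveOn ℝ (Ici 0) g)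
    (h0 : g 0 = 0) {x y : ℝ} (hx : 0 < x) (hgx : 0 < g x) (hy : 0 < y) (hgy : g y < 0) :
    ∃! T, 0 < T ∧ g T = 0 := by
  have hcont : ContinuousOn g (Ioi 0) := by
    simpa using hg.concaveOn.continuousOn_interior
  have hsub : uIcc x y ⊆ Ioi 0 := fun t ht => (lt_min hx hy).trans_le ht.1
  obtain ⟨c, hc, hgc⟩ :=
    intermediate_value_uIcc (hcont.mono hsub) (mem_uIcc.2 (Or.inr ⟨hgy.le, hgx.le⟩))
  have no_two_roots : ∀ s t, 0 < s → s < t → g s = 0 → g t = 0 → False := by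
    intro s t hs hst hgs hgt
    have ht := hs.trans hst
    have := hg.secant_strict_mono self_mem_Ici hs.le ht.le hs.ne' ht.ne' hst
    simp [h0, hgs, hgt] at this
  refine ⟨c, ⟨hsub hc, hgc⟩, fun t ⟨ht, hgt⟩ => ?_⟩
  rcases lt_trichotomy t c with h | h | h
  · exact (no_two_roots t c ht h hgt hgc).elim
  · exact h
  · exact (no_two_roots c t (hsub hc) h hgc hgt).elim

theorem hasDerivAt_log_mul_add_one {c x : ℝ} (h : 0 < c * x + 1) :
    HasDerivAt (fun T => log (c * T + 1)) (c / (c * x + 1)) x := by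
  simpa using (((hasDerivAt_id x).const_mul c).add_const 1).log h.ne'

theorem hasDerivAt_log_div_mul_add_one {b c x : ℝ} (hb : 0 < b * x + 1) (hc : 0 < c * x + 1) :
    HasDerivAt (fun T => log ((b * T + 1) / (c * T + 1)))
      ((b - c) / ((b * x + 1) * (c * x + 1))) x := by
  have hlin : ∀ d : ℝ, HasDerivAt (fun T => d * T + 1) d x := fun d => by
    simpa using ((hasDerivAt_id x).const_mul d).add_const 1
  refine (((hlin b).fun_div (hlin c) hc.ne').log (div_pos hb hc).ne').congr_deriv ?_
  field_simp
  ring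

section LogRhs

variable (a : ℝ) (S : Finset ℕ) (α : ℕ → ℝ)

/-- The right-hand side of the equation, with `a = m` and `S = {1, …, D - 1}`. -/
noncomputable def logRhs (T : ℝ) : ℝ :=
  (1 / (a + 1)) * log ((a + 1) * T + 1) +
    ∑ k ∈ S, (1 / α k) * log ((a * T + 1) / ((a - α k) * T + 1))

noncomputable def logRhsDeriv (T : ℝ) : ℝ :=
  1 / ((a + 1) * T + 1) + ∑ k ∈ S, 1 / ((a * T + 1) * ((a - α k) * T + 1))

theorem logRhs_zero : logRhs a S α 0 = 0 := by
  simp [logRhs]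

theorem logRhsDeriv_zero : logRhsDeriv a S α 0 = 1 + S.card := by
  simp [logRhsDeriv]

variable {a S α} (ha : 0 ≤ a) (hα : ∀ k ∈ S, 0 < α k ∧ α k ≤ a)
include ha hα

theorem hasDerivAt_logRhs {x : ℝ} (hx : 0 ≤ x) :
    HasDerivAt (logRhs a S α) (logRhsDeriv a S α x) x := by
  have hpos : ∀ c, 0 ≤ c → 0 < c * x + 1 := fun c hc => by positivity
  have hfirst := (hasDerivAt_log_mul_add_one (hpos (a + 1) (by linarith))).const_mul (1 / (a + 1))
  have hsum : HasDerivAt (fun T => ∑ k ∈ S, (1 / α k) * log ((a * T + 1) / ((a - α k) * T + 1)))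
      (∑ k ∈ S, 1 / ((a * x + 1) * ((a - α k) * x + 1))) x := by
    refine HasDerivAt.fun_sum fun k hk => ?_
    obtain ⟨hα0, hαa⟩ := hα k hk
    refine ((hasDerivAt_log_div_mul_add_one (hpos a ha) (hpos (a - α k) (by linarith))).const_mul
      (1 / α k)).congr_deriv ?_
    field_simp
    ring
  refine (hfirst.fun_add hsum).congr_deriv ?_
  rw [logRhsDeriv]
  congr 1
  field_simp

theorem strictAntiOn_logRhsDeriv : StrictAntiOn (logRhsDeriv a S α) (Ici 0) := by
  intro x (hx : 0 ≤ x) y (hy : 0 ≤ y) hxy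
  refine add_lt_add_of_lt_of_le (by gcongr) (Finset.sum_le_sum fun k hk => ?_)
  have : 0 ≤ a - α k := by linarith [hα k hk]
  gcongr

theorem strictConcaveOn_logRhs : StrictConcaveOn ℝ (Ici 0) (logRhs a S α) := by
  refine StrictAntiOn.strictConcaveOn_of_deriv (convex_Ici 0)
    (fun x hx => (hasDerivAt_logRhs ha hα hx).continuousAt.continuousWithinAt) ?_
  rw [interior_Ici]
  refine (strictAntiOn_logRhsDeriv ha hα).mono Ioi_subset_Ici_self |>.congr fun x hx => ?_
  exact ((hasDerivAt_logRhs ha hα (le_of_lt hx)).deriv).symm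

theorem logRhs_le {T : ℝ} (hT : 0 ≤ T) :
    logRhs a S α T ≤ (1 / (a + 1) + ∑ k ∈ S, 1 / α k) * log ((a + 1) * T + 1) := by
  rw [add_mul, Finset.sum_mul]
  refine add_le_add le_rfl (Finset.sum_le_sum fun k hk => ?_)
  obtain ⟨hα0, hαa⟩ := hα k hk
  have hden : 1 ≤ (a - α k) * T + 1 := by nlinarith
  gcongr
  calc (a * T + 1) / ((a - α k) * T + 1) ≤ a * T + 1 := div_le_self (by positivity) hden
    _ ≤ (a + 1) * T + 1 := by nlinarith

theorem exists_logRhs_lt : ∃ T > 0, logRhs a S α T < T := by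
  set C := 1 / (a + 1) + ∑ k ∈ S, 1 / α k
  have haff : Tendsto (fun T => (a + 1) * T + 1) atTop atTop :=
    tendsto_atTop_add_const_right _ 1 (tendsto_id.const_mul_atTop (by linarith))
  have haffO : (fun T => (a + 1) * T + 1) =O[atTop] id :=
    (isBigO_const_mul_self (a + 1) id atTop).add (isLittleO_const_id_atTop 1).isBigO
  have hlog : (fun T => C * log ((a + 1) * T + 1)) =o[atTop] id :=
    ((isLittleO_log_id_atTop.comp_tendsto haff).trans_isBigO haffO).const_mul_left C
  obtain ⟨T, hT, hTpos⟩ := ((hlog.bound one_half_pos).and (eventually_gt_atTop 0)).exists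
  refine ⟨T, hTpos, (logRhs_le ha hα hTpos.le).trans_lt ?_⟩
  have := (le_abs_self _).trans hT
  simp only [Real.norm_eq_abs, id, abs_of_pos hTpos] at this
  linarith

theorem exists_lt_logRhs (hS : S.Nonempty) : ∃ T > 0, T < logRhs a S α T := by
  set g := fun T => logRhs a S α T - T
  have hg : HasDerivAt g (logRhsDeriv a S α 0 - 1) 0 :=
    (hasDerivAt_logRhs ha hα le_rfl).sub (hasDerivAt_id 0)
  have hg' : 0 < deriv g 0 := by
    rw [hg.deriv, logRhsDeriv_zero]
    simpa using hS.card_pos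
  have hsign := eventually_nhdsWithin_sign_eq_of_deriv_pos hg' (by simp [g, logRhs_zero])
  obtain ⟨T, hTsign, hT⟩ :=
    ((hsign.filter_mono nhdsWithin_le_nhds).and (self_mem_nhdsWithin (s := Ioi 0))).exists
  rw [sub_zero, sign_pos hT, sign_eq_one_iff] at hTsign
  exact ⟨T, hT, sub_pos.1 hTsign⟩

theorem existsUnique_pos_eq_logRhs (hS : S.Nonempty) : ∃! T, 0 < T ∧ T = logRhs a S α T := by
  obtain ⟨x, hx, hgx⟩ := exists_lt_logRhs ha hα hS
  obtain ⟨y, hy, hgy⟩ := exists_logRhs_lt ha hα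
  have := ((strictConcaveOn_logRhs ha hα).sub_convexOn (convexOn_id (convex_Ici 0))
    ).existsUnique_pos_eq_zero (by simp [logRhs_zero]) hx (sub_pos.2 hgx) hy (sub_neg.2 hgy)
  simpa [sub_eq_zero, eq_comm] using this

end LogRhs

theorem stmt11_general (m D : ℕ) (hD : 2 ≤ D)
    (α : ℕ → ℝ) (hα : ∀ k ∈ Finset.Icc 1 (D - 1), 1 ≤ α k ∧ α k ≤ (m : ℝ)) :
    ∃! T : ℝ, 0 < T ∧
      T = (1 / ((m : ℝ) + 1)) * Real.log (((m : ℝ) + 1) * T + 1) +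
        ∑ k ∈ Finset.Icc 1 (D - 1),
          (1 / α k) * Real.log (((m : ℝ) * T + 1) / (((m : ℝ) - α k) * T + 1)) :=
  existsUnique_pos_eq_logRhs m.cast_nonneg (fun k hk => ⟨by linarith [hα k hk], (hα k hk).2⟩)
    ⟨1, Finset.mem_Icc.2 ⟨le_rfl, by omega⟩⟩

/-- Equation (20): the equation
`T = (1/(m+1)) ln((m+1)T + 1) + ∑_{k=1}^{D-1} (1/α_k) ln((mT+1)/((m-α_k)T+1))`
has exactly one positive solution. -/
theorem stmt11 (m D : ℕ) (hm : 1 ≤ m) (hD : 2 ≤ D)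
    (α : ℕ → ℝ) (hα : ∀ k ∈ Finset.Icc 1 (D - 1), 1 ≤ α k ∧ α k ≤ (m : ℝ)) :
    ∃! T : ℝ, 0 < T ∧
      T = (1 / ((m : ℝ) + 1)) * Real.log (((m : ℝ) + 1) * T + 1) +
        ∑ k ∈ Finset.Icc 1 (D - 1),
          (1 / α k) * Real.log (((m : ℝ) * T + 1) / (((m : ℝ) - α k) * T + 1)) :=
  stmt11_general m D hD α hα
end

section
/- Let m ≥ 1 and D ≥ 2 be integers and α_1,…,α_{D−1} reals with 1 ≤ α_k ≤ m. Then the function τ ↦ c(τ)/T(τ), defined on {τ ∈ (ℝ_{≥0})^D : T(τ) > 0}, is bounded and attains its supremum; i.e., there exists τ̃ with T(τ̃) > 0 such that c(τ̃)/T(τ̃) ≥ c(τ)/T(τ) for all τ with T(τ) > 0. -/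
lemma cfun_bounds (m : ℕ) (hm : 1 ≤ m) (α : ℕ → ℝ) (k : ℕ)
    (hk : k ≠ 0 → 1 ≤ α k ∧ α k ≤ (m : ℝ)) {τ : ℝ} (hτ : 0 ≤ τ) :
    0 ≤ cfun m α k τ ∧ cfun m α k τ ≤ 1 ∧ cfun m α k τ ≤ (m : ℝ) * τ := by
  have hm' : (1 : ℝ) ≤ (m : ℝ) := by exact_mod_cast hm
  unfold cfun
  by_cases h : k = 0
  · rw [h, if_pos rfl]
    set M : ℝ := (m : ℝ) + 1 with hM
    have hM2 : (2 : ℝ) ≤ M := by linarith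
    have h1 : Real.exp (-M * τ) ≤ 1 := Real.exp_le_one_iff.mpr (by nlinarith)
    have h2 : 1 - M * τ ≤ Real.exp (-M * τ) := by
      have := Real.add_one_le_exp (-M * τ); linarith
    have h3 : 0 < Real.exp (-M * τ) := Real.exp_pos _
    have hMpos : (0:ℝ) < M := by linarith
    refine ⟨mul_nonneg (by positivity) (by linarith), ?_, ?_⟩
    · rw [one_div, inv_mul_le_iff₀ hMpos]; nlinarith
    · rw [one_div, inv_mul_le_iff₀ hMpos]; nlinarith
  · obtain ⟨ha1, ha2⟩ := hk h
    simp only [if_neg h]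
    set a : ℝ := α k
    set E1 : ℝ := Real.exp (-(m : ℝ) * τ) with hE1
    set E2 : ℝ := Real.exp (a * τ) with hE2
    have hE1p : 0 < E1 := Real.exp_pos _
    have hE2p : 0 < E2 := Real.exp_pos _
    have hE2ge : 1 ≤ E2 := Real.one_le_exp (by nlinarith)
    have h12 : E1 * E2 ≤ 1 := by
      rw [hE1, hE2, ← Real.exp_add]
      exact Real.exp_le_one_iff.mpr (by nlinarith)
    have hkey : E2 * (1 - a * τ) ≤ 1 := by
      have h4 : 1 - a * τ ≤ Real.exp (-(a * τ)) := by
        have := Real.add_one_le_exp (-(a * τ)); linarith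
      have h5 : E2 * Real.exp (-(a * τ)) = 1 := by
        rw [hE2, ← Real.exp_add]; simp
      nlinarith
    have haτ : 0 ≤ a * τ := mul_nonneg (by linarith) hτ
    have t1 : E1 * (E2 - 1) ≤ (a * τ) * (E1 * E2) := by
      nlinarith [mul_le_mul_of_nonneg_left (show E2 - 1 ≤ a * τ * E2 by nlinarith) hE1p.le]
    have t2 : (a * τ) * (E1 * E2) ≤ a * τ := by
      nlinarith [mul_le_mul_of_nonneg_left h12 haτ]
    have t3 : a * τ ≤ (m : ℝ) * τ := mul_le_mul_of_nonneg_right ha2 hτ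
    refine ⟨by nlinarith, by nlinarith, by linarith⟩

lemma cfun_continuous (m : ℕ) (α : ℕ → ℝ) (k : ℕ) : Continuous (cfun m α k) := by
  unfold cfun
  split
  · continuity
  · continuity

/-- The ratio `c(τ)/T(τ)` is bounded on `{τ ∈ (ℝ≥0)^D : T(τ) > 0}` and attains its
supremum: there is a maximizer `τ̃`. -/
theorem stmt12 (m D : ℕ) (hm : 1 ≤ m) (hD : 2 ≤ D)
    (α : ℕ → ℝ) (hα : ∀ k ∈ Finset.Icc 1 (D - 1), 1 ≤ α k ∧ α k ≤ (m : ℝ)) :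
    ∃ τt : ℕ → ℝ, (∀ k < D, 0 ≤ τt k) ∧ 0 < Tsum D τt ∧
      ∀ τ : ℕ → ℝ, (∀ k < D, 0 ≤ τ k) → 0 < Tsum D τ →
        cprod m D α τ / Tsum D τ ≤ cprod m D α τt / Tsum D τt := by
  have hm' : (1 : ℝ) ≤ (m : ℝ) := by exact_mod_cast hm
  have hD' : (2 : ℝ) ≤ (D : ℝ) := by exact_mod_cast hD
  have hα' : ∀ k : ℕ, k < D → k ≠ 0 → 1 ≤ α k ∧ α k ≤ (m : ℝ) := by
    intro k hkD hk
    exact hα k (Finset.mem_Icc.mpr ⟨Nat.one_le_iff_ne_zero.mpr hk, by omega⟩)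
  -- work in Fin D → ℝ
  set G : (Fin D → ℝ) → ℝ := fun x => ∏ i : Fin D, cfun m α i (x i) with hGdef
  set S : (Fin D → ℝ) → ℝ := fun x => ∑ i : Fin D, x i with hSdef
  have hGτ : ∀ τ : ℕ → ℝ, cprod m D α τ = G (fun i => τ i) := by
    intro τ
    rw [cprod, hGdef, ← Fin.prod_univ_eq_prod_range (fun k => cfun m α k (τ k))]
  have hSτ : ∀ τ : ℕ → ℝ, Tsum D τ = S (fun i => τ i) := by
    intro τ
    rw [Tsum, hSdef, ← Fin.sum_univ_eq_sum_range (fun k => τ k)]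
  have hGcont : Continuous G :=
    continuous_finset_prod _ fun i _ => (cfun_continuous m α i).comp (continuous_apply i)
  have hScont : Continuous S := continuous_finset_sum _ fun i _ => continuous_apply i
  -- bounds on G
  have hGbound : ∀ x : Fin D → ℝ, (∀ i, 0 ≤ x i) →
      0 ≤ G x ∧ G x ≤ 1 ∧ G x ≤ ∏ i : Fin D, ((m : ℝ) * x i) := by
    intro x hx
    have hb : ∀ i : Fin D, 0 ≤ cfun m α i (x i) ∧ cfun m α i (x i) ≤ 1 ∧
        cfun m α i (x i) ≤ (m : ℝ) * x i := fun i =>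
      cfun_bounds m hm α i (fun h => hα' i i.isLt h) (hx i)
    refine ⟨Finset.prod_nonneg fun i _ => (hb i).1,
      Finset.prod_le_one (fun i _ => (hb i).1) (fun i _ => (hb i).2.1),
      Finset.prod_le_prod (fun i _ => (hb i).1) (fun i _ => (hb i).2.2)⟩
  -- the reference point
  set ones : Fin D → ℝ := fun _ => 1 with hones
  have hSones : S ones = D := by simp [hSdef, hones]
  have hGones : 0 < G ones := by
    rw [hGdef]
    apply Finset.prod_pos
    intro i _
    have hone1 : ones i = 1 := rfl
    rw [hone1, cfun]
    by_cases h : (i : ℕ) = 0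
    · rw [if_pos h]
      have hE : Real.exp (-((m:ℝ)+1) * 1) < 1 := by
        rw [Real.exp_lt_one_iff]; nlinarith
      have hMpos : (0:ℝ) < (m:ℝ) + 1 := by linarith
      exact mul_pos (by positivity) (by linarith)
    · rw [if_neg h]
      obtain ⟨ha1, _⟩ := hα' i i.isLt h
      have hE : 1 < Real.exp (α i * 1) := by
        rw [Real.one_lt_exp_iff]; nlinarith
      exact mul_pos (Real.exp_pos _) (by linarith)
  set v : ℝ := G ones / D with hv
  have hvpos : 0 < v := div_pos hGones (by linarith)
  set R : ℝ := max 1 (1 / v) with hR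
  have hR1 : (1:ℝ) ≤ R := le_max_left _ _
  have hRv : 1 / v ≤ R := le_max_right _ _
  set ε : ℝ := min 1 (v / (m : ℝ) ^ D) with hε
  have hεpos : 0 < ε := lt_min one_pos (div_pos hvpos (by positivity))
  have hε1 : ε ≤ 1 := min_le_left _ _
  have hεv : ε ≤ v / (m : ℝ) ^ D := min_le_right _ _
  -- compact set
  set K : Set (Fin D → ℝ) :=
    (Set.univ.pi fun _ : Fin D => Set.Icc (0:ℝ) R) ∩ {x | ε ≤ S x} with hK
  have hKcompact : IsCompact K := by
    have h1 : IsCompact (Set.univ.pi fun _ : Fin D => Set.Icc (0:ℝ) R) :=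
      isCompact_univ_pi fun _ => isCompact_Icc
    exact h1.of_isClosed_subset
      (((isClosed_set_pi fun _ _ => isClosed_Icc).inter
        (isClosed_le continuous_const hScont)))
      Set.inter_subset_left
  have honesK : ones ∈ K := by
    constructor
    · intro i _
      exact ⟨zero_le_one, hR1⟩
    · show ε ≤ S ones
      rw [hSones]; linarith
  have hFcont : ContinuousOn (fun x => G x / S x) K := by
    apply ContinuousOn.div hGcont.continuousOn hScont.continuousOn
    intro x hx
    have : ε ≤ S x := hx.2
    linarith
  obtain ⟨x0, hx0K, hmax⟩ := hKcompact.exists_isMaxOn ⟨ones, honesK⟩ hFcont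
  have hx0nn : ∀ i, 0 ≤ x0 i := fun i => (hx0K.1 i (Set.mem_univ i)).1
  have hSx0 : ε ≤ S x0 := hx0K.2
  have hvle : v ≤ G x0 / S x0 := by
    have := hmax honesK
    simpa [hv, hSones] using this
  -- define τt
  refine ⟨fun k => if h : k < D then x0 ⟨k, h⟩ else 0, ?_, ?_, ?_⟩
  · intro k hk
    dsimp only
    rw [dif_pos hk]
    exact hx0nn _
  · have : (fun i : Fin D => if h : (i:ℕ) < D then x0 ⟨i, h⟩ else 0) = x0 := by
      funext i; rw [dif_pos i.isLt]
    rw [hSτ]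
    simp only [this]
    linarith
  · intro τ hτ0 hτT
    have hx0eq : (fun i : Fin D => if h : (i:ℕ) < D then x0 ⟨i, h⟩ else 0) = x0 := by
      funext i; rw [dif_pos i.isLt]
    rw [hGτ, hSτ, hGτ, hSτ]
    simp only [hx0eq]
    set x : Fin D → ℝ := fun i => τ i with hx
    have hxnn : ∀ i, 0 ≤ x i := fun i => hτ0 i i.isLt
    have hSx : 0 < S x := by rw [← hSτ]; exact hτT
    obtain ⟨hG0, hG1, hGlin⟩ := hGbound x hxnn
    have hxiS : ∀ i, x i ≤ S x := by
      intro i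
      exact Finset.single_le_sum (fun j _ => hxnn j) (Finset.mem_univ i)
    -- suffices to treat cases
    by_cases hxK : x ∈ K
    · exact hmax hxK
    · -- show G x / S x ≤ v ≤ G x0 / S x0
      refine le_trans ?_ hvle
      rw [div_le_iff₀ hSx]
      by_cases hsmall : S x < ε
      · -- G x ≤ m^D * (S x)^D ≤ v * S x
        have h1 : G x ≤ ∏ i : Fin D, ((m : ℝ) * S x) := by
          refine hGlin.trans (Finset.prod_le_prod (fun i _ => mul_nonneg (by positivity) (hxnn i)) ?_)
          intro i _
          exact mul_le_mul_of_nonneg_left (hxiS i) (by positivity)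
        have h2 : (∏ i : Fin D, ((m : ℝ) * S x)) = ((m:ℝ) * S x) ^ D := by
          rw [Finset.prod_const, Finset.card_univ, Fintype.card_fin]
        have h3 : ((m:ℝ) * S x) ^ D = (m:ℝ)^D * (S x)^D := mul_pow _ _ _
        have h4 : (S x) ^ (D - 1) ≤ S x := by
          calc (S x) ^ (D-1) ≤ (S x) ^ 1 :=
            pow_le_pow_of_le_one hSx.le (by linarith) (by omega)
          _ = S x := pow_one _
        have h5 : (S x) ^ D = (S x)^(D-1) * S x := by
          rw [← pow_succ]
          congr 1
          omega
        have h6 : (m:ℝ)^D * (S x)^(D-1) ≤ (m:ℝ)^D * S x :=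
          mul_le_mul_of_nonneg_left h4 (by positivity)
        have h7 : (m:ℝ)^D * S x ≤ (m:ℝ)^D * ε := by
          apply mul_le_mul_of_nonneg_left (by linarith) (by positivity)
        have h8 : (m:ℝ)^D * ε ≤ v := by
          have hmD : (0:ℝ) < (m:ℝ)^D := by positivity
          calc (m:ℝ)^D * ε ≤ (m:ℝ)^D * (v / (m:ℝ)^D) :=
            mul_le_mul_of_nonneg_left hεv hmD.le
          _ = v := by field_simp
        calc G x ≤ (m:ℝ)^D * (S x)^D := by rw [← h3, ← h2]; exact h1
        _ = ((m:ℝ)^D * (S x)^(D-1)) * S x := by rw [h5]; ring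
        _ ≤ v * S x := mul_le_mul_of_nonneg_right (by linarith) hSx.le
      · -- some coordinate exceeds R, so S x > R ≥ 1/v
        push_neg at hsmall
        have : ∃ i : Fin D, R < x i := by
          by_contra hc
          push_neg at hc
          exact hxK ⟨fun i _ => ⟨hxnn i, hc i⟩, hsmall⟩
        obtain ⟨i, hi⟩ := this
        have hSR : 1 / v ≤ S x := le_trans hRv (le_trans hi.le (hxiS i))
        have : 1 ≤ v * S x := by
          rw [div_le_iff₀ hvpos] at hSR
          linarith
        linarith
end

section
/- Let v be a trajectory of the consensus system defined on an interval [t_0, t_1]. Then the velocity diameter is non-increasing: for all t_0 ≤ s ≤ t ≤ t_1, Δ_N(t) ≤ Δ_N(s). -/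
/-!
Project the velocities onto a fixed direction `w`. Each projection `⟪w, vᵢ⟫` obeys the scalar
consensus equation, and an agent attaining the maximal projection has a non-positive derivative,
since all its neighbours lie below it. By a Dini-derivative argument the maximal projection is
therefore non-increasing, and so is the minimal one (use `-w`). Choosing for `w` the unit
vector along `vᵢ(t) - vⱼ(t)` bounds `‖vᵢ(t) - vⱼ(t)‖` by the width of the configuration at
time `s` in the direction `w`, which is at most `Δ_N(s)`.
-/

open Filter Set Topology
open scoped RealInnerProductSpace

section UpperEnvelope

variable {ι : Type*} [Fintype ι] [Nonempty ι]

noncomputable def upperEnvelope (F : ι → ℝ → ℝ) (x : ℝ) : ℝ :=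
  Finset.univ.sup' Finset.univ_nonempty fun i => F i x

lemma le_upperEnvelope (F : ι → ℝ → ℝ) (i : ι) (x : ℝ) : F i x ≤ upperEnvelope F x :=
  Finset.le_sup' (F · x) (Finset.mem_univ i)

lemma exists_eq_upperEnvelope (F : ι → ℝ → ℝ) (x : ℝ) :
    ∃ i, F i x = upperEnvelope F x := by
  obtain ⟨i, -, hi⟩ := Finset.exists_mem_eq_sup' Finset.univ_nonempty (F · x)
  exact ⟨i, hi.symm⟩

lemma ContinuousOn.upperEnvelope {F : ι → ℝ → ℝ} {s : Set ℝ}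
    (hF : ∀ i, ContinuousOn (F i) s) : ContinuousOn (upperEnvelope F) s :=
  ContinuousOn.finset_sup'_apply Finset.univ_nonempty fun i _ => hF i

lemma eventually_exists_eq_upperEnvelope_of_continuousAt {F : ι → ℝ → ℝ} {x : ℝ}
    (hF : ∀ i, ContinuousAt (F i) x) :
    ∀ᶠ z in 𝓝 x, ∃ i, F i x = upperEnvelope F x ∧ F i z = upperEnvelope F z := by
  obtain ⟨i₀, hi₀⟩ := exists_eq_upperEnvelope F x
  have hbelow : ∀ᶠ z in 𝓝 x, ∀ j, F j x < upperEnvelope F x → F j z < F i₀ z :=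
    eventually_all.2 fun j => eventually_imp_distrib_left.2 fun hj =>
      (hF j).eventually_lt (hF i₀) (hi₀ ▸ hj)
  filter_upwards [hbelow] with z hz
  obtain ⟨j, hj⟩ := exists_eq_upperEnvelope F z
  refine ⟨j, (le_upperEnvelope F j x).eq_or_lt.resolve_right fun hlt => ?_, hj⟩
  linarith [hz j hlt, le_upperEnvelope F i₀ z]

lemma eventually_slope_upperEnvelope_lt {F : ι → ℝ → ℝ} {F' : ι → ℝ} {x r : ℝ}
    (hF : ∀ i, HasDerivAt (F i) (F' i) x)
    (hr : ∀ i, F i x = upperEnvelope F x → F' i < r) :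
    ∀ᶠ z in 𝓝[>] x, slope (upperEnvelope F) x z < r := by
  have hslope : ∀ᶠ z in 𝓝[>] x, ∀ i, F i x = upperEnvelope F x → slope (F i) x z < r :=
    eventually_all.2 fun i => eventually_imp_distrib_left.2 fun hi =>
      ((hasDerivAt_iff_tendsto_slope.mp (hF i)).eventually
        (eventually_lt_nhds (hr i hi))).filter_mono (nhdsWithin_mono x fun _ hz => ne_of_gt hz)
  filter_upwards [hslope, nhdsWithin_le_nhds
    (eventually_exists_eq_upperEnvelope_of_continuousAt fun i => (hF i).continuousAt)]
    with z hz ⟨i, hix, hiz⟩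
  rw [slope_def_field, ← hix, ← hiz, ← slope_def_field]
  exact hz i hix

lemma antitoneOn_upperEnvelope {F F' : ι → ℝ → ℝ} {a b : ℝ}
    (hF : ∀ i, ∀ x ∈ Icc a b, HasDerivAt (F i) (F' i x) x)
    (hF' : ∀ x ∈ Icc a b, ∀ i, F i x = upperEnvelope F x → F' i x ≤ 0) :
    AntitoneOn (upperEnvelope F) (Icc a b) := by
  intro s hs t ht hst
  have hsub : Icc s t ⊆ Icc a b := Icc_subset_Icc hs.1 ht.2
  refine image_le_of_liminf_slope_right_le_deriv_boundary (B := fun _ => upperEnvelope F s)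
    (B' := fun _ => 0)
    (ContinuousOn.upperEnvelope fun i x hx =>
      (hF i x (hsub hx)).continuousAt.continuousWithinAt)
    le_rfl continuousOn_const (fun x _ => hasDerivWithinAt_const x _ _) (fun x hx r hr => ?_)
    ⟨hst, le_rfl⟩
  have hx : x ∈ Icc a b := hsub (Ico_subset_Icc_self hx)
  exact (eventually_slope_upperEnvelope_lt (fun i => hF i x hx)
    fun i hi => (hF' x hx i hi).trans_lt hr).frequently

lemma antitoneOn_upperEnvelope_of_consensus {a : ℝ → ι → ι → ℝ} (ha : ∀ t i j, 0 ≤ a t i j)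
    {F : ι → ℝ → ℝ} {t₀ t₁ : ℝ}
    (hF : ∀ i, ∀ t ∈ Icc t₀ t₁, HasDerivAt (F i) (∑ j, a t i j * (F j t - F i t)) t) :
    AntitoneOn (upperEnvelope F) (Icc t₀ t₁) :=
  antitoneOn_upperEnvelope (F' := fun i t => ∑ j, a t i j * (F j t - F i t)) hF
    fun t _ i hi => Finset.sum_nonpos fun j _ =>
      mul_nonpos_of_nonneg_of_nonpos (ha t i j) (sub_nonpos.2 (hi ▸ le_upperEnvelope F j t))

variable {E : Type*} [NormedAddCommGroup E] [InnerProductSpace ℝ E]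

lemma antitoneOn_upperEnvelope_inner_of_consensus {a : ℝ → ι → ι → ℝ}
    (ha : ∀ t i j, 0 ≤ a t i j) {v : ℝ → ι → E} {t₀ t₁ : ℝ}
    (hv : ∀ i, ∀ t ∈ Icc t₀ t₁,
      HasDerivAt (fun u => v u i) (∑ j, a t i j • (v t j - v t i)) t)
    (w : E) : AntitoneOn (upperEnvelope fun i u => ⟪w, v u i⟫) (Icc t₀ t₁) :=
  antitoneOn_upperEnvelope_of_consensus ha fun i t ht => by
    simpa [inner_sum, real_inner_smul_right, inner_sub_right] using
      (hasDerivAt_const t w).inner ℝ (hv i t ht)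

end UpperEnvelope

lemma exists_norm_le_one_inner_eq_norm {E : Type*} [NormedAddCommGroup E]
    [InnerProductSpace ℝ E] (x : E) : ∃ w : E, ‖w‖ ≤ 1 ∧ ⟪w, x⟫ = ‖x‖ := by
  refine ⟨‖x‖⁻¹ • x, ?_, ?_⟩
  · rw [norm_smul, norm_inv, norm_norm]
    exact inv_mul_le_one_of_le₀ le_rfl (norm_nonneg x)
  · rw [real_inner_smul_left, real_inner_self_eq_norm_sq]
    rcases eq_or_ne ‖x‖ 0 with hx | hx
    · simp [hx]
    · field_simp

lemma exists_norm_sub_le_of_consensus {ι E : Type*} [Fintype ι] [NormedAddCommGroup E]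
    [InnerProductSpace ℝ E] {a : ℝ → ι → ι → ℝ} (ha : ∀ t i j, 0 ≤ a t i j)
    {v : ℝ → ι → E} {t₀ t₁ : ℝ}
    (hv : ∀ i, ∀ t ∈ Icc t₀ t₁,
      HasDerivAt (fun u => v u i) (∑ j, a t i j • (v t j - v t i)) t)
    {s t : ℝ} (hs : s ∈ Icc t₀ t₁) (ht : t ∈ Icc t₀ t₁) (hst : s ≤ t) (i j : ι) :
    ∃ i' j', ‖v t i - v t j‖ ≤ ‖v s i' - v s j'‖ := by
  have : Nonempty ι := ⟨i⟩
  obtain ⟨w, hw, hwx⟩ := exists_norm_le_one_inner_eq_norm (v t i - v t j)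
  obtain ⟨i', hi'⟩ := exists_eq_upperEnvelope (fun k u => ⟪w, v u k⟫) s
  obtain ⟨j', hj'⟩ := exists_eq_upperEnvelope (fun k u => ⟪-w, v u k⟫) s
  have hmax := antitoneOn_upperEnvelope_inner_of_consensus ha hv w hs ht hst
  have hmin := antitoneOn_upperEnvelope_inner_of_consensus ha hv (-w) hs ht hst
  refine ⟨i', j', ?_⟩
  calc ‖v t i - v t j‖ = ⟪w, v t i⟫ + ⟪-w, v t j⟫ := by
        rw [← hwx, inner_sub_right, inner_neg_left, sub_eq_add_neg]
    _ ≤ ⟪w, v s i'⟫ + ⟪-w, v s j'⟫ := by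
        rw [hi', hj']
        exact add_le_add ((le_upperEnvelope _ i t).trans hmax)
          ((le_upperEnvelope _ j t).trans hmin)
    _ = ⟪w, v s i' - v s j'⟫ := by rw [inner_sub_right, inner_neg_left, sub_eq_add_neg]
    _ ≤ ‖w‖ * ‖v s i' - v s j'‖ := real_inner_le_norm _ _
    _ ≤ ‖v s i' - v s j'‖ := mul_le_of_le_one_left (norm_nonneg _) hw

lemma sdiam_le_sdiam_of_forall_exists {n d : ℕ} {S S' : Set (Fin n)}
    {v v' : Fin n → EuclideanSpace ℝ (Fin d)}
    (h : ∀ i ∈ S, ∀ j ∈ S, ∃ i' ∈ S', ∃ j' ∈ S', ‖v i - v j‖ ≤ ‖v' i' - v' j'‖) :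
    sdiam S v ≤ sdiam S' v' := by
  have hfin : {x | ∃ i ∈ S', ∃ j ∈ S', x = ‖v' i - v' j‖}.Finite :=
    (finite_range fun p : Fin n × Fin n => ‖v' p.1 - v' p.2‖).subset
      (by rintro _ ⟨i, -, j, -, rfl⟩; exact ⟨(i, j), rfl⟩)
  refine Real.sSup_le ?_ (Real.sSup_nonneg (by rintro _ ⟨i, -, j, -, rfl⟩; exact norm_nonneg _))
  rintro _ ⟨i, hi, j, hj, rfl⟩
  obtain ⟨i', hi', j', hj', hle⟩ := h i hi j hj
  exact hle.trans (le_csSup hfin.bddAbove ⟨i', hi', j', hj', rfl⟩)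

theorem stmt13_general {n d : ℕ}
    (a : ℝ → Fin n → Fin n → ℝ)
    (ha01 : ∀ t i j, a t i j = 0 ∨ a t i j = 1)
    (t0 t1 : ℝ) (v : ℝ → Fin n → EuclideanSpace ℝ (Fin d))
    (htraj : ∀ i : Fin n, ∀ t ∈ Set.Icc t0 t1,
      HasDerivAt (fun u => v u i) (∑ j, a t i j • (v t j - v t i)) t) :
    ∀ s ∈ Set.Icc t0 t1, ∀ t ∈ Set.Icc t0 t1, s ≤ t →
      sdiam Set.univ (v t) ≤ sdiam Set.univ (v s) := by
  intro s hs t ht hst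
  have ha : ∀ t i j, 0 ≤ a t i j := fun t i j => by rcases ha01 t i j with h | h <;> simp [h]
  refine sdiam_le_sdiam_of_forall_exists fun i _ j _ => ?_
  obtain ⟨i', j', hle⟩ := exists_norm_sub_le_of_consensus ha htraj hs ht hst i j
  exact ⟨i', trivial, j', trivial, hle⟩

/-- For a trajectory of the consensus system
`v̇ᵢ = ∑ⱼ aᵢⱼ(t)(vⱼ - vᵢ)` (with `aᵢⱼ(t) ∈ {0,1}` and `∑ⱼ aᵢⱼ(t) = m`)
defined on `[t₀, t₁]`, the velocity diameter is non-increasing. -/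
theorem stmt13 {n d : ℕ} (hn : 0 < n) (m : ℕ) (hm : 1 ≤ m)
    (a : ℝ → Fin n → Fin n → ℝ)
    (ha01 : ∀ t i j, a t i j = 0 ∨ a t i j = 1)
    (harow : ∀ t i, ∑ j, a t i j = (m : ℝ))
    (t0 t1 : ℝ) (v : ℝ → Fin n → EuclideanSpace ℝ (Fin d))
    (htraj : ∀ i : Fin n, ∀ t ∈ Set.Icc t0 t1,
      HasDerivAt (fun u => v u i) (∑ j, a t i j • (v t j - v t i)) t) :
    ∀ s ∈ Set.Icc t0 t1, ∀ t ∈ Set.Icc t0 t1, s ≤ t →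
      sdiam Set.univ (v t) ≤ sdiam Set.univ (v s) :=
  stmt13_general a ha01 t0 t1 v htraj
end

section
/- Let v_1,…,v_n ∈ ℝ^d, let U ⊆ N = {1,…,n}, and let i, j ∈ U satisfy ‖v_i − v_j‖ = max_{p,q∈U} ‖v_p − v_q‖. Let Δ = max_{p,q∈N} ‖v_p − v_q‖. Let real numbers m ≥ α ≥ 0 and coefficients a_{ih}, a_{jl} ∈ {0,1} (h, l ∈ N) satisfy Σ_{h∉U} a_{ih} ≤ m − α and Σ_{l∉U} a_{jl} ≤ m − α. Then Σ_{h∈N} a_{ih}·⟨v_h − v_i, v_i − v_j⟩ + Σ_{l∈N} a_{jl}·⟨v_l − v_j, v_j − v_i⟩ ≤ (m − α)·(Δ·‖v_i − v_j‖ − ‖v_i − v_j‖²). -/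
open scoped RealInnerProductSpace

/-- Key estimate in the proof of Lemma 9: for a pair `i, j ∈ U` realizing the diameter
of `U`, coefficients `a_{ih}, a_{jl} ∈ {0,1}` whose mass outside `U` is at most `m - α`
satisfy
`∑ₕ a_{ih} ⟪vₕ - vᵢ, vᵢ - vⱼ⟫ + ∑ₗ a_{jl} ⟪vₗ - vⱼ, vⱼ - vᵢ⟫
  ≤ (m - α)(Δ ‖vᵢ - vⱼ‖ - ‖vᵢ - vⱼ‖²)` where `Δ` is the diameter of the whole group. -/
theorem stmt15 {n d : ℕ} (v : Fin n → EuclideanSpace ℝ (Fin d))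
    (U : Finset (Fin n)) (i j : Fin n) (hi : i ∈ U) (hj : j ∈ U)
    (hij : ∀ p ∈ U, ∀ q ∈ U, ‖v p - v q‖ ≤ ‖v i - v j‖)
    (Δ : ℝ) (hΔ : IsGreatest {x | ∃ p q : Fin n, x = ‖v p - v q‖} Δ)
    (m α : ℝ) (hα : 0 ≤ α) (hm : α ≤ m)
    (ai aj : Fin n → ℝ)
    (hai : ∀ h, ai h = 0 ∨ ai h = 1) (haj : ∀ l, aj l = 0 ∨ aj l = 1)
    (hsumi : ∑ h ∈ Uᶜ, ai h ≤ m - α) (hsumj : ∑ l ∈ Uᶜ, aj l ≤ m - α) :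
    ∑ h, ai h * ⟪v h - v i, v i - v j⟫ + ∑ l, aj l * ⟪v l - v j, v j - v i⟫
      ≤ (m - α) * (Δ * ‖v i - v j‖ - ‖v i - v j‖ ^ 2) := by
  set C : ℝ := Δ * ‖v i - v j‖ - ‖v i - v j‖ ^ 2 with hCdef
  have hΔd : ‖v i - v j‖ ≤ Δ := hΔ.2 ⟨i, j, rfl⟩
  have hC0 : 0 ≤ C := by nlinarith [norm_nonneg (v i - v j)]
  have hai0 : ∀ h, 0 ≤ ai h := fun h => by rcases hai h with h1 | h1 <;> simp [h1]
  have haj0 : ∀ l, 0 ≤ aj l := fun l => by rcases haj l with h1 | h1 <;> simp [h1]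
  have hma : 0 ≤ m - α :=
    le_trans (Finset.sum_nonneg fun h _ => hai0 h) hsumi
  -- pair bound: for any h, l the two inner products sum to at most C
  have fact4 : ∀ h l : Fin n,
      ⟪v h - v i, v i - v j⟫ + ⟪v l - v j, v j - v i⟫ ≤ C := by
    intro h l
    have h1 : ⟪v h - v l, v i - v j⟫ ≤ Δ * ‖v i - v j‖ :=
      le_trans (real_inner_le_norm _ _)
        (mul_le_mul_of_nonneg_right (hΔ.2 ⟨h, l, rfl⟩) (norm_nonneg _))
    have e : v h - v i = (v h - v l) - (v i - v j) + (v l - v j) := by abel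
    have e2 : v j - v i = -(v i - v j) := by abel
    have h2 : ⟪v h - v i, v i - v j⟫ + ⟪v l - v j, v j - v i⟫
        = ⟪v h - v l, v i - v j⟫ - ‖v i - v j‖ ^ 2 := by
      rw [e, e2, inner_add_left, inner_sub_left, inner_neg_right,
        real_inner_self_eq_norm_sq]
      ring
    linarith
  have h3i : ∀ h, ⟪v h - v i, v i - v j⟫ ≤ C := fun h => by
    have := fact4 h j; simpa using this
  have h3j : ∀ l, ⟪v l - v j, v j - v i⟫ ≤ C := fun l => by
    have := fact4 i l; simpa using this
  -- inside U the inner products are nonpositive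
  have fact2i : ∀ h ∈ U, ⟪v h - v i, v i - v j⟫ ≤ 0 := by
    intro h hU
    have e : v h - v j = (v h - v i) + (v i - v j) := by abel
    have key : ‖v h - v j‖ ^ 2
        = ‖v h - v i‖ ^ 2 + 2 * ⟪v h - v i, v i - v j⟫ + ‖v i - v j‖ ^ 2 := by
      rw [e, norm_add_sq_real]
    have h1 : ‖v h - v j‖ ≤ ‖v i - v j‖ := hij h hU j hj
    nlinarith [norm_nonneg (v h - v i), norm_nonneg (v h - v j), norm_nonneg (v i - v j)]
  have fact2j : ∀ l ∈ U, ⟪v l - v j, v j - v i⟫ ≤ 0 := by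
    intro l hU
    have e : v l - v i = (v l - v j) + (v j - v i) := by abel
    have key : ‖v l - v i‖ ^ 2
        = ‖v l - v j‖ ^ 2 + 2 * ⟪v l - v j, v j - v i⟫ + ‖v j - v i‖ ^ 2 := by
      rw [e, norm_add_sq_real]
    have h1 : ‖v l - v i‖ ≤ ‖v i - v j‖ := hij l hU i hi
    have h2 : ‖v j - v i‖ = ‖v i - v j‖ := norm_sub_rev _ _
    nlinarith [norm_nonneg (v l - v j), norm_nonneg (v l - v i), norm_nonneg (v i - v j)]
  have hinU_i : ∑ h ∈ U, ai h * ⟪v h - v i, v i - v j⟫ ≤ 0 :=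
    Finset.sum_nonpos fun h hU => mul_nonpos_of_nonneg_of_nonpos (hai0 h) (fact2i h hU)
  have hinU_j : ∑ l ∈ U, aj l * ⟪v l - v j, v j - v i⟫ ≤ 0 :=
    Finset.sum_nonpos fun l hU => mul_nonpos_of_nonneg_of_nonpos (haj0 l) (fact2j l hU)
  rw [← Finset.sum_add_sum_compl U (fun h => ai h * ⟪v h - v i, v i - v j⟫),
    ← Finset.sum_add_sum_compl U (fun l => aj l * ⟪v l - v j, v j - v i⟫)]
  have hout : ∑ h ∈ Uᶜ, ai h * ⟪v h - v i, v i - v j⟫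
      + ∑ l ∈ Uᶜ, aj l * ⟪v l - v j, v j - v i⟫ ≤ (m - α) * C := by
    rcases Finset.eq_empty_or_nonempty Uᶜ with he | hne
    · simp only [he, Finset.sum_empty, add_zero]
      positivity
    · obtain ⟨h₀, hh₀, hmaxi⟩ :=
        Finset.exists_max_image Uᶜ (fun h => ⟪v h - v i, v i - v j⟫) hne
      obtain ⟨l₀, hl₀, hmaxj⟩ :=
        Finset.exists_max_image Uᶜ (fun l => ⟪v l - v j, v j - v i⟫) hne
      set s : ℝ := max 0 (⟪v h₀ - v i, v i - v j⟫) with hsdef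
      set t : ℝ := max 0 (⟪v l₀ - v j, v j - v i⟫) with htdef
      have hs0 : 0 ≤ s := le_max_left _ _
      have ht0 : 0 ≤ t := le_max_left _ _
      have hbi : ∑ h ∈ Uᶜ, ai h * ⟪v h - v i, v i - v j⟫ ≤ (m - α) * s := by
        calc ∑ h ∈ Uᶜ, ai h * ⟪v h - v i, v i - v j⟫
            ≤ ∑ h ∈ Uᶜ, ai h * s := Finset.sum_le_sum fun h hh =>
              mul_le_mul_of_nonneg_left
                (le_trans (hmaxi h hh) (le_max_right _ _)) (hai0 h)
          _ = (∑ h ∈ Uᶜ, ai h) * s := by rw [← Finset.sum_mul]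
          _ ≤ (m - α) * s := mul_le_mul_of_nonneg_right hsumi hs0
      have hbj : ∑ l ∈ Uᶜ, aj l * ⟪v l - v j, v j - v i⟫ ≤ (m - α) * t := by
        calc ∑ l ∈ Uᶜ, aj l * ⟪v l - v j, v j - v i⟫
            ≤ ∑ l ∈ Uᶜ, aj l * t := Finset.sum_le_sum fun l hl =>
              mul_le_mul_of_nonneg_left
                (le_trans (hmaxj l hl) (le_max_right _ _)) (haj0 l)
          _ = (∑ l ∈ Uᶜ, aj l) * t := by rw [← Finset.sum_mul]
          _ ≤ (m - α) * t := mul_le_mul_of_nonneg_right hsumj ht0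
      have hst : s + t ≤ C := by
        rcases le_total (⟪v h₀ - v i, v i - v j⟫) 0 with h1 | h1 <;>
          rcases le_total (⟪v l₀ - v j, v j - v i⟫) 0 with h2 | h2
        · rw [hsdef, htdef, max_eq_left h1, max_eq_left h2]; simpa using hC0
        · rw [hsdef, htdef, max_eq_left h1, max_eq_right h2]
          simpa using h3j l₀
        · rw [hsdef, htdef, max_eq_right h1, max_eq_left h2]
          simpa using h3i h₀
        · rw [hsdef, htdef, max_eq_right h1, max_eq_right h2]
          exact fact4 h₀ l₀
      have : (m - α) * s + (m - α) * t ≤ (m - α) * C := by nlinarith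
      linarith
  linarith
end

section
/- Let m ≥ α > 0 and Δ ≥ δ be real numbers, let t ∈ ℝ and τ ≥ 0, and let φ : [t, t+τ] → ℝ be differentiable with φ(t) ≤ Δ and φ'(s) ≤ m·(Δ − φ(s)) − α·e^{−(m−α)(s−t)}·(Δ − δ) for all s ∈ [t, t+τ]. Then φ(t+τ) ≤ Δ − e^{−(m−α)τ}·(1 − e^{−ατ})·(Δ − δ). -/
/-!
With `u = Δ - φ` the hypothesis reads `u' + m u ≥ α (Δ - δ) e^{-(m-α)(s-t)}`. Multiplying by the
integrating factor `e^{m(s-t)}` turns the right-hand side into the derivative of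
`(Δ - δ) e^{α(s-t)}`, so `e^{m(s-t)} u(s) - (Δ - δ) e^{α(s-t)}` is nondecreasing. Comparing its
values at `t` and `t + τ`, and using `u(t) ≥ 0`, gives the bound.
-/

open Real Set

lemma monotoneOn_exp_mul_sub_of_le {u u' G G' : ℝ → ℝ} {m a b : ℝ}
    (hu : ∀ s ∈ Icc a b, HasDerivAt u (u' s) s)
    (hG : ∀ s ∈ Icc a b, HasDerivAt G (G' s) s)
    (hle : ∀ s ∈ Icc a b, G' s ≤ exp (m * (s - a)) * (u' s + m * u s)) :
    MonotoneOn (fun s => exp (m * (s - a)) * u s - G s) (Icc a b) := by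
  have hderiv : ∀ s ∈ Icc a b, HasDerivAt (fun s => exp (m * (s - a)) * u s - G s)
      (exp (m * (s - a)) * (u' s + m * u s) - G' s) s := by
    intro s hs
    have he : HasDerivAt (fun s => exp (m * (s - a))) (exp (m * (s - a)) * m) s := by
      simpa using (((hasDerivAt_id s).sub_const a).const_mul m).exp
    exact ((he.mul (hu s hs)).sub (hG s hs)).congr_deriv (by ring)
  exact monotoneOn_of_hasDerivWithinAt_nonneg (convex_Icc a b)
    (fun s hs => (hderiv s hs).continuousAt.continuousWithinAt)
    (fun s hs => (hderiv s (interior_subset hs)).hasDerivWithinAt)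
    (fun s hs => sub_nonneg.2 (hle s (interior_subset hs)))

lemma exp_mul_mul_exp_neg_sub_mul (m α x : ℝ) :
    exp (m * x) * exp (-(m - α) * x) = exp (α * x) := by
  rw [← exp_add]
  ring_nf

lemma exp_neg_sub_mul_mul_one_sub (m α τ : ℝ) :
    exp (-(m - α) * τ) * (1 - exp (-α * τ)) = (exp (m * τ))⁻¹ * (exp (α * τ) - 1) := by
  rw [← exp_neg, mul_sub, mul_sub, ← exp_add, ← exp_add]
  ring_nf

theorem stmt16_general (m α Δ δ t τ : ℝ) (hτ : 0 ≤ τ)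
    (φ φ' : ℝ → ℝ)
    (hd : ∀ s ∈ Set.Icc t (t + τ), HasDerivAt φ (φ' s) s)
    (hφt : φ t ≤ Δ)
    (hb : ∀ s ∈ Set.Icc t (t + τ),
      φ' s ≤ m * (Δ - φ s) - α * Real.exp (-(m - α) * (s - t)) * (Δ - δ)) :
    φ (t + τ) ≤ Δ - Real.exp (-(m - α) * τ) * (1 - Real.exp (-α * τ)) * (Δ - δ) := by
  have hG : ∀ s, HasDerivAt (fun s => (Δ - δ) * exp (α * (s - t)))
      ((Δ - δ) * (exp (α * (s - t)) * α)) s := fun s => by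
    simpa using ((((hasDerivAt_id s).sub_const t).const_mul α).exp.const_mul (Δ - δ))
  have hmono := monotoneOn_exp_mul_sub_of_le (m := m) (u' := fun s => -φ' s)
    (fun s hs => (hd s hs).const_sub Δ) (fun s _ => hG s) (fun s hs => by
      have := mul_le_mul_of_nonneg_left (hb s hs) (exp_pos (m * (s - t))).le
      linear_combination this - α * (Δ - δ) * exp_mul_mul_exp_neg_sub_mul m α (s - t))
  have hcmp := hmono (left_mem_Icc.2 (by linarith)) (right_mem_Icc.2 (by linarith))
    (by linarith)
  simp only [sub_self, mul_zero, exp_zero, one_mul, mul_one, add_sub_cancel_left] at hcmp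
  rw [exp_neg_sub_mul_mul_one_sub, mul_assoc, le_sub_comm, inv_mul_le_iff₀ (exp_pos _)]
  linarith

/-- Integration step of Lemma 4 (case k ≥ 1): a differentiable function `φ` with
`φ t ≤ Δ` and derivative bound
`φ' s ≤ m (Δ - φ s) - α e^{-(m-α)(s-t)} (Δ - δ)` on `[t, t+τ]` satisfies
`φ (t+τ) ≤ Δ - e^{-(m-α)τ} (1 - e^{-ατ}) (Δ - δ)`. -/
theorem stmt16 (m α Δ δ t τ : ℝ) (hα : 0 < α) (hm : α ≤ m) (hδ : δ ≤ Δ) (hτ : 0 ≤ τ)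
    (φ φ' : ℝ → ℝ)
    (hd : ∀ s ∈ Set.Icc t (t + τ), HasDerivAt φ (φ' s) s)
    (hφt : φ t ≤ Δ)
    (hb : ∀ s ∈ Set.Icc t (t + τ),
      φ' s ≤ m * (Δ - φ s) - α * Real.exp (-(m - α) * (s - t)) * (Δ - δ)) :
    φ (t + τ) ≤ Δ - Real.exp (-(m - α) * τ) * (1 - Real.exp (-α * τ)) * (Δ - δ) :=
  stmt16_general m α Δ δ t τ hτ φ φ' hd hφt hb
end
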